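/- arXiv:quant-ph/0211111 — 9 statements merged into one kernel-verified Lean document; each statement's English description precedes it below -/
import Mathlib

section
/- Sufficiency of the optimality conditions: let {ρ_i, 1 ≤ i ≤ m} be density matrices with prior probabilities p_i > 0 summing to 1, and let {Π_i} be a POVM. If there exists an Hermitian matrix X such that X − p_iρ_i is positive semidefinite for all i and (X − p_iρ_i)Π_i = 0 for all i, then for every POVM {Π'_i} one has Σ_i p_i tr(ρ_iΠ'_i) ≤ Σ_i p_i tr(ρ_iΠ_i); that is, {Π_i} maximizes the probability of correct detection. -/
open Matrix
open scoped ComplexOrder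

lemma psd_trace_nonneg {n : ℕ} {A : Matrix (Fin n) (Fin n) ℂ} (hA : A.PosSemidef) :
    0 ≤ A.trace := by
  rw [Matrix.trace]
  apply Finset.sum_nonneg
  intro i _
  exact hA.diag_nonneg

open scoped MatrixOrder in
lemma psd_mul_trace_nonneg {n : ℕ} {A B : Matrix (Fin n) (Fin n) ℂ}
    (hA : A.PosSemidef) (hB : B.PosSemidef) : 0 ≤ (A * B).trace := by
  have h1 : A = CFC.sqrt A * CFC.sqrt A := (CFC.sqrt_mul_sqrt_self A hA.nonneg).symm
  have h2 : (A * B).trace = (CFC.sqrt A * B * CFC.sqrt A).trace := by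
    conv_lhs => rw [h1]
    rw [Matrix.mul_assoc, Matrix.trace_mul_comm]
  rw [h2]
  have hH : (CFC.sqrt A).IsHermitian := (CFC.sqrt_nonneg A).posSemidef.isHermitian
  have : (CFC.sqrt A * B * (CFC.sqrt A)ᴴ).PosSemidef := hB.mul_mul_conjTranspose_same (CFC.sqrt A)
  rw [hH.eq] at this
  exact psd_trace_nonneg this

/-- Sufficiency of the optimality conditions: if there exists an Hermitian
matrix `X` with `X - p_i ρ_i` positive semidefinite and `(X - p_i ρ_i) Π_i = 0` for all `i`,
then the POVM `{Π_i}` maximizes the probability of correct detection `∑ p_i tr(ρ_i Π_i)`. -/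
theorem optimality_conditions_sufficient (n m : ℕ)
    (ρ : Fin m → Matrix (Fin n) (Fin n) ℂ)
    (hρpsd : ∀ i, (ρ i).PosSemidef) (hρtr : ∀ i, (ρ i).trace = 1)
    (p : Fin m → ℝ) (hp : ∀ i, 0 < p i) (hpsum : ∑ i, p i = 1)
    (Pm : Fin m → Matrix (Fin n) (Fin n) ℂ)
    (hPmpsd : ∀ i, (Pm i).PosSemidef) (hPmsum : ∑ i, Pm i = 1)
    (X : Matrix (Fin n) (Fin n) ℂ) (hX : X.IsHermitian)
    (hXge : ∀ i, (X - (p i : ℂ) • ρ i).PosSemidef)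
    (hXz : ∀ i, (X - (p i : ℂ) • ρ i) * Pm i = 0) :
    ∀ Pm' : Fin m → Matrix (Fin n) (Fin n) ℂ,
      (∀ i, (Pm' i).PosSemidef) → (∑ i, Pm' i = 1) →
      ∑ i, p i * ((ρ i * Pm' i).trace).re ≤ ∑ i, p i * ((ρ i * Pm i).trace).re := by
  intro Pm' hPm'psd hPm'sum
  -- key: p i * (ρ i * Q).trace.re = (((p i : ℂ) • ρ i) * Q).trace.re
  have key : ∀ (i : Fin m) (Q : Matrix (Fin n) (Fin n) ℂ),
      p i * ((ρ i * Q).trace).re = ((((p i : ℂ) • ρ i) * Q).trace).re := by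
    intro i Q
    rw [Matrix.smul_mul, Matrix.trace_smul]
    simp [Complex.ofReal_mul]
  -- RHS equals (X.trace).re
  have hR : ∑ i, p i * ((ρ i * Pm i).trace).re = (X.trace).re := by
    have hXP : ∀ i, ((p i : ℂ) • ρ i) * Pm i = X * Pm i := by
      intro i
      have := hXz i
      rw [Matrix.sub_mul, sub_eq_zero] at this
      exact this.symm
    calc ∑ i, p i * ((ρ i * Pm i).trace).re
        = ∑ i, ((X * Pm i).trace).re := by
          refine Finset.sum_congr rfl fun i _ => ?_
          rw [key i, hXP i]
      _ = ((∑ i, X * Pm i).trace).re := by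
          rw [Matrix.trace_sum, Complex.re_sum]
      _ = (X.trace).re := by
          rw [← Finset.mul_sum, hPmsum, mul_one]
  rw [hR]
  -- LHS ≤ (X.trace).re
  have hL : ∀ i, p i * ((ρ i * Pm' i).trace).re ≤ ((X * Pm' i).trace).re := by
    intro i
    rw [key i]
    have h := psd_mul_trace_nonneg (hXge i) (hPm'psd i)
    rw [Matrix.sub_mul, Matrix.trace_sub] at h
    have := ((Complex.le_def.mp h)).1
    simp only [Complex.zero_re, Complex.sub_re] at this
    linarith
  calc ∑ i, p i * ((ρ i * Pm' i).trace).re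
      ≤ ∑ i, ((X * Pm' i).trace).re := Finset.sum_le_sum fun i _ => hL i
    _ = ((∑ i, X * Pm' i).trace).re := by rw [Matrix.trace_sum, Complex.re_sum]
    _ = (X.trace).re := by rw [← Finset.mul_sum, hPm'sum, mul_one]
end

section
/- (Theorem 1) Let {ρ_i = φ_iφ_i*, 1 ≤ i ≤ m} be density matrices with prior probabilities p_i > 0 summing to 1, set ψ_i = √p_i φ_i, assume W = Σ_i ψ_iψ_i* is positive definite, and let μ_i = W^{-1/2}ψ_i be the LSM factors. If there is a real constant α such that μ_i*ψ_i = ψ_i*W^{-1/2}ψ_i = α·I_{k_i} for every i, then the least-squares measurement {Σ_i = μ_iμ_i*} minimizes the probability of a detection error: for every POVM {Π_i}, Σ_i p_i tr(ρ_iΠ_i) ≤ Σ_i p_i tr(ρ_iΣ_i). -/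
open Matrix
open scoped ComplexOrder

/-- The square root of a positive semidefinite matrix, as `Matrix.PosSemidef.sqrt` was defined
in Mathlib (December 2024); it has since been removed from Mathlib. -/
noncomputable def Matrix.PosSemidef.sqrt {n : Type*} [Fintype n] [DecidableEq n] {𝕜 : Type*}
    [RCLike 𝕜] {A : Matrix n n 𝕜} (hA : A.PosSemidef) : Matrix n n 𝕜 :=
  hA.1.eigenvectorUnitary.1 * diagonal ((↑) ∘ (√·) ∘ hA.1.eigenvalues) *
    (star hA.1.eigenvectorUnitary : Matrix n n 𝕜)

theorem Matrix.PosSemidef.posSemidef_sqrt {n : Type*} [Fintype n] [DecidableEq n] {𝕜 : Type*}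
    [RCLike 𝕜] {A : Matrix n n 𝕜} (hA : A.PosSemidef) : hA.sqrt.PosSemidef := by
  have hd : (diagonal ((↑) ∘ (√·) ∘ hA.1.eigenvalues) : Matrix n n 𝕜).PosSemidef := by
    apply Matrix.PosSemidef.diagonal
    intro i
    simp only [Pi.zero_apply, Function.comp_apply]
    exact_mod_cast Real.sqrt_nonneg _
  have := hd.mul_mul_conjTranspose_same (hA.1.eigenvectorUnitary : Matrix n n 𝕜)
  unfold Matrix.PosSemidef.sqrt
  rwa [star_eq_conjTranspose]

theorem Matrix.PosSemidef.sqrt_mul_self {n : Type*} [Fintype n] [DecidableEq n] {𝕜 : Type*}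
    [RCLike 𝕜] {A : Matrix n n 𝕜} (hA : A.PosSemidef) : hA.sqrt * hA.sqrt = A := by
  conv_rhs => rw [hA.1.spectral_theorem]
  rw [Unitary.conjStarAlgAut_apply]
  unfold Matrix.PosSemidef.sqrt
  have hU : (star hA.1.eigenvectorUnitary : Matrix n n 𝕜) * hA.1.eigenvectorUnitary = 1 :=
    Unitary.coe_star_mul_self _
  simp only [Matrix.mul_assoc]
  rw [← Matrix.mul_assoc (star hA.1.eigenvectorUnitary : Matrix n n 𝕜), hU, Matrix.one_mul,
    ← Matrix.mul_assoc (diagonal _), diagonal_mul_diagonal]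
  congr 3
  funext i
  simp only [Function.comp_apply]
  rw [← RCLike.ofReal_mul, Real.mul_self_sqrt (hA.eigenvalues_nonneg i)]

lemma trace_nonneg_of_posSemidef {ι : Type*} [Fintype ι] [DecidableEq ι]
    {A : Matrix ι ι ℂ} (hA : A.PosSemidef) : 0 ≤ A.trace := by
  rw [Matrix.trace]
  apply Finset.sum_nonneg
  intro i _
  exact hA.diag_nonneg

lemma trace_mul_nonneg_of_posSemidef {ι : Type*} [Fintype ι] [DecidableEq ι]
    {A B : Matrix ι ι ℂ} (hA : A.PosSemidef) (hB : B.PosSemidef) :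
    0 ≤ (A * B).trace := by
  have h1 : A = hA.sqrt * hA.sqrt := hA.sqrt_mul_self.symm
  have hQ : (hA.sqrt)ᴴ = hA.sqrt := hA.posSemidef_sqrt.1
  have h2 : (A * B).trace = (hA.sqrt * B * (hA.sqrt)ᴴ).trace := by
    rw [hQ]
    conv_lhs => rw [h1, Matrix.mul_assoc, Matrix.trace_mul_comm]
  rw [h2]
  exact trace_nonneg_of_posSemidef (hB.mul_mul_conjTranspose_same hA.sqrt)

/-- Theorem 1: for density matrices `ρ_i = φ_i φ_i*` with priors `p_i`,
weighted factors `ψ_i = √p_i φ_i`, `W = ∑ ψ_i ψ_i*` positive definite, and LSM factors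
`μ_i = W^{-1/2} ψ_i`, if `μ_i* ψ_i = ψ_i* W^{-1/2} ψ_i = α I` for all `i`, then the
least-squares measurement `{Σ_i = μ_i μ_i*}` minimizes the probability of a detection
error: every POVM `{Π_i}` satisfies `∑ p_i tr(ρ_i Π_i) ≤ ∑ p_i tr(ρ_i Σ_i)`. -/
theorem lsm_optimal_of_constant_diagonal (n m : ℕ) (k : Fin m → ℕ)
    (φ : (i : Fin m) → Matrix (Fin n) (Fin (k i)) ℂ)
    (ρ : Fin m → Matrix (Fin n) (Fin n) ℂ)
    (hρdef : ∀ i, ρ i = φ i * (φ i)ᴴ) (hρtr : ∀ i, (ρ i).trace = 1)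
    (p : Fin m → ℝ) (hp : ∀ i, 0 < p i) (hpsum : ∑ i, p i = 1)
    (ψ : (i : Fin m) → Matrix (Fin n) (Fin (k i)) ℂ)
    (hψ : ∀ i, ψ i = (Real.sqrt (p i) : ℂ) • φ i)
    (W : Matrix (Fin n) (Fin n) ℂ)
    (hWdef : W = ∑ i, ψ i * (ψ i)ᴴ) (hW : W.PosDef)
    (μ : (i : Fin m) → Matrix (Fin n) (Fin (k i)) ℂ)
    (hμ : ∀ i, μ i = (hW.posSemidef.sqrt)⁻¹ * ψ i)
    (α : ℝ)
    (hα : ∀ i, (μ i)ᴴ * ψ i = (α : ℂ) • 1) :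
    ∀ Pm : Fin m → Matrix (Fin n) (Fin n) ℂ,
      (∀ i, (Pm i).PosSemidef) → (∑ i, Pm i = 1) →
      ∑ i, p i * ((ρ i * Pm i).trace).re ≤
        ∑ i, p i * ((ρ i * (μ i * (μ i)ᴴ)).trace).re := by
  intro Pm hPm hPsum
  -- trivial case m = 0
  rcases Nat.eq_zero_or_pos m with hm | hm
  · subst hm; simp
  set S := hW.posSemidef.sqrt with hSdef
  have hSherm : Sᴴ = S := hW.posSemidef.posSemidef_sqrt.1
  have hSsq : S * S = W := hW.posSemidef.sqrt_mul_self
  have hdetS : IsUnit S.det := by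
    have hdW : W.det ≠ 0 := hW.det_pos.ne'
    rw [← hSsq, Matrix.det_mul] at hdW
    exact (mul_ne_zero_iff.mp hdW).1.isUnit
  have hSinvherm : (S⁻¹)ᴴ = S⁻¹ := by
    rw [Matrix.conjTranspose_nonsing_inv, hSherm]
  -- ψψᴴ = p • ρ
  have hpsi : ∀ i, ψ i * (ψ i)ᴴ = (p i : ℂ) • ρ i := by
    intro i
    rw [hψ i, hρdef i, Matrix.conjTranspose_smul, Matrix.smul_mul, Matrix.mul_smul,
      smul_smul]
    congr 1
    rw [RCLike.star_def, Complex.conj_ofReal, ← Complex.ofReal_mul,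
      Real.mul_self_sqrt (hp i).le]
  -- the key identity ψᴴ S⁻¹ ψ = α • 1
  have hkey : ∀ i, (ψ i)ᴴ * S⁻¹ * ψ i = (α : ℂ) • 1 := by
    intro i
    have := hα i
    rwa [hμ i, Matrix.conjTranspose_mul, hSinvherm] at this
  -- Q = square root of S
  set Q := hW.posSemidef.posSemidef_sqrt.sqrt with hQdef
  have hQherm : Qᴴ = Q := hW.posSemidef.posSemidef_sqrt.posSemidef_sqrt.1
  have hQsq : Q * Q = S := hW.posSemidef.posSemidef_sqrt.sqrt_mul_self
  have hdetQ : IsUnit Q.det := by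
    have : S.det ≠ 0 := fun h => (by simp [h] at hdetS : False)
    rw [← hQsq, Matrix.det_mul] at this
    exact (mul_ne_zero_iff.mp this).1.isUnit
  set N : (i : Fin m) → Matrix (Fin n) (Fin (k i)) ℂ := fun i => Q⁻¹ * ψ i with hNdef
  have hNN : ∀ i, (N i)ᴴ * N i = (α : ℂ) • 1 := by
    intro i
    have hQinv2 : Q⁻¹ * Q⁻¹ = S⁻¹ := by rw [← Matrix.mul_inv_rev, hQsq]
    calc (N i)ᴴ * N i = (ψ i)ᴴ * ((Q⁻¹)ᴴ * Q⁻¹) * ψ i := by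
          simp [hNdef, Matrix.conjTranspose_mul, Matrix.mul_assoc]
      _ = (ψ i)ᴴ * S⁻¹ * ψ i := by
          rw [Matrix.conjTranspose_nonsing_inv, hQherm, hQinv2, Matrix.mul_assoc]
      _ = (α : ℂ) • 1 := hkey i
  have hQN : ∀ i, Q * N i = ψ i := by
    intro i
    rw [hNdef, ← Matrix.mul_assoc, Matrix.mul_nonsing_inv _ hdetQ, Matrix.one_mul]
  -- α is nonnegative
  have hα0 : 0 ≤ α := by
    set i0 : Fin m := ⟨0, hm⟩
    have hk0 : 0 < k i0 := by
      rcases Nat.eq_zero_or_pos (k i0) with hk | hk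
      · exfalso
        haveI : IsEmpty (Fin (k i0)) := by rw [hk]; infer_instance
        have hz : ρ i0 = 0 := by
          rw [hρdef i0]
          ext a b
          rw [Matrix.mul_apply]
          simp
        have h1 := hρtr i0
        rw [hz, Matrix.trace_zero] at h1
        exact zero_ne_one h1
      · exact hk
    have h1 : (0:ℂ) ≤ ((N i0)ᴴ * N i0).trace :=
      trace_nonneg_of_posSemidef (Matrix.posSemidef_conjTranspose_mul_self (N i0))
    rw [hNN i0, Matrix.trace_smul, Matrix.trace_one] at h1
    have h2 : (0:ℝ) ≤ α * (k i0) := by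
      have := (Complex.le_def.mp h1).1
      simpa using this
    have h3 : (0:ℝ) < (k i0 : ℝ) := by exact_mod_cast hk0
    nlinarith [h2, h3]
  -- key PSD fact: α • S - ψ ψᴴ is PSD
  have hPSD : ∀ i, ((α : ℂ) • S - ψ i * (ψ i)ᴴ).PosSemidef := by
    intro i
    have hM : ∃ M : Matrix (Fin n) (Fin n) ℂ,
        M.PosSemidef ∧ (α : ℂ) • (1 : Matrix (Fin n) (Fin n) ℂ) - N i * (N i)ᴴ = M := by
      rcases eq_or_lt_of_le hα0 with hz | hpos
      · -- α = 0
        have hNz : N i = 0 := by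
          have := hNN i
          rw [← hz] at this
          simp only [Complex.ofReal_zero, zero_smul] at this
          exact Matrix.conjTranspose_mul_self_eq_zero.mp this
        refine ⟨0, Matrix.PosSemidef.zero, ?_⟩
        rw [hNz, ← hz]
        simp
      · set M : Matrix (Fin n) (Fin n) ℂ :=
          (α : ℂ) • (1 : Matrix (Fin n) (Fin n) ℂ) - N i * (N i)ᴴ with hMdef
        have hPP : (N i * (N i)ᴴ) * (N i * (N i)ᴴ) = (α : ℂ) • (N i * (N i)ᴴ) := by
          calc (N i * (N i)ᴴ) * (N i * (N i)ᴴ)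
              = N i * ((N i)ᴴ * N i) * (N i)ᴴ := by
                simp only [Matrix.mul_assoc]
            _ = (α : ℂ) • (N i * (N i)ᴴ) := by
                rw [hNN i, Matrix.mul_smul, Matrix.mul_one, Matrix.smul_mul]
        have hMherm : Mᴴ = M := by
          simp [hMdef, Matrix.conjTranspose_smul, Matrix.conjTranspose_mul,
            Complex.star_def, Complex.conj_ofReal]
        have hMsq : M * M = (α : ℂ) • M := by
          simp only [hMdef, Matrix.sub_mul, Matrix.mul_sub, Matrix.smul_mul,
            Matrix.mul_smul, Matrix.one_mul, Matrix.mul_one, hPP, smul_sub]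
          module
        set c : ℂ := (Real.sqrt α⁻¹ : ℂ) with hcdef
        set L : Matrix (Fin n) (Fin n) ℂ := c • M with hLdef
        have hLL : Lᴴ * L = M := by
          rw [hLdef, Matrix.conjTranspose_smul, Matrix.smul_mul, Matrix.mul_smul,
            smul_smul, hMherm, hMsq, smul_smul]
          have hc : star c * c * (α : ℂ) = 1 := by
            rw [hcdef, RCLike.star_def, Complex.conj_ofReal, ← Complex.ofReal_mul,
              Real.mul_self_sqrt (inv_nonneg.mpr hα0), ← Complex.ofReal_mul,
              inv_mul_cancel₀ hpos.ne']
            simp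
          rw [hc, one_smul]
        exact ⟨M, hLL ▸ Matrix.posSemidef_conjTranspose_mul_self L, rfl⟩
    obtain ⟨M, hMpsd, hMeq⟩ := hM
    have heq : (α : ℂ) • S - ψ i * (ψ i)ᴴ = Q * M * Qᴴ := by
      rw [hQherm, ← hMeq]
      rw [Matrix.mul_sub, Matrix.sub_mul, Matrix.mul_smul, Matrix.mul_one,
        Matrix.smul_mul, hQsq]
      congr 1
      calc ψ i * (ψ i)ᴴ = (Q * N i) * ((N i)ᴴ * Q) := by
            rw [hQN i, ← hQherm, ← Matrix.conjTranspose_mul, hQN i]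
        _ = Q * (N i * (N i)ᴴ) * Q := by
            simp only [Matrix.mul_assoc]
    rw [heq]
    exact hMpsd.mul_mul_conjTranspose_same Q
  -- per-term inequality: re tr(ψψᴴ Π_i) ≤ re (α tr(S Π_i))
  have hterm : ∀ i, ((ψ i * (ψ i)ᴴ * Pm i).trace).re ≤ ((α : ℂ) * (S * Pm i).trace).re := by
    intro i
    have h0 : (0:ℂ) ≤ (((α : ℂ) • S - ψ i * (ψ i)ᴴ) * Pm i).trace :=
      trace_mul_nonneg_of_posSemidef (hPSD i) (hPm i)
    have hexp : (((α : ℂ) • S - ψ i * (ψ i)ᴴ) * Pm i).trace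
        = (α : ℂ) * (S * Pm i).trace - (ψ i * (ψ i)ᴴ * Pm i).trace := by
      rw [Matrix.sub_mul, Matrix.trace_sub, Matrix.smul_mul, Matrix.trace_smul,
        smul_eq_mul]
    rw [hexp] at h0
    have := (Complex.le_def.mp h0).1
    simp only [Complex.zero_re, Complex.sub_re] at this
    linarith
  -- rewrite both sides using ψψᴴ = p • ρ
  have hLHS : ∀ i (B : Matrix (Fin n) (Fin n) ℂ),
      p i * ((ρ i * B).trace).re = ((ψ i * (ψ i)ᴴ * B).trace).re := by
    intro i B
    rw [hpsi i, Matrix.smul_mul, Matrix.trace_smul]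
    simp [Complex.ofReal_re, Complex.smul_re]
  -- sum of α tr(S Pm i) = α tr S
  have hsum1 : ∑ i, ((α : ℂ) * (S * Pm i).trace).re = ((α : ℂ) * S.trace).re := by
    rw [← Complex.re_sum, ← Finset.mul_sum, ← Matrix.trace_sum, ← Matrix.mul_sum, hPsum,
      Matrix.mul_one]
  -- the RHS equals α tr S
  have hRHS : ∑ i, p i * ((ρ i * (μ i * (μ i)ᴴ)).trace).re = ((α : ℂ) * S.trace).re := by
    have hterm2 : ∀ i, ψ i * (ψ i)ᴴ * (μ i * (μ i)ᴴ)
        = (α : ℂ) • (ψ i * (ψ i)ᴴ * S⁻¹) := by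
      intro i
      rw [hμ i, Matrix.conjTranspose_mul, hSinvherm]
      calc ψ i * (ψ i)ᴴ * (S⁻¹ * ψ i * ((ψ i)ᴴ * S⁻¹))
          = ψ i * ((ψ i)ᴴ * S⁻¹ * ψ i) * ((ψ i)ᴴ * S⁻¹) := by
            simp only [Matrix.mul_assoc]
        _ = (α : ℂ) • (ψ i * (ψ i)ᴴ * S⁻¹) := by
            rw [hkey i, Matrix.mul_smul, Matrix.mul_one, Matrix.smul_mul,
              Matrix.mul_assoc]
    calc ∑ i, p i * ((ρ i * (μ i * (μ i)ᴴ)).trace).re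
        = ∑ i, ((ψ i * (ψ i)ᴴ * (μ i * (μ i)ᴴ)).trace).re := by
          exact Finset.sum_congr rfl fun i _ => hLHS i _
      _ = ((α : ℂ) * (W * S⁻¹).trace).re := by
          rw [← Complex.re_sum]
          congr 1
          rw [hWdef, Matrix.sum_mul, Matrix.trace_sum, Finset.mul_sum]
          exact Finset.sum_congr rfl fun i _ => by
            rw [hterm2 i, Matrix.trace_smul, smul_eq_mul, Matrix.mul_assoc]
      _ = ((α : ℂ) * S.trace).re := by
          rw [← hSsq, Matrix.mul_assoc, Matrix.mul_nonsing_inv _ hdetS, Matrix.mul_one]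
  calc ∑ i, p i * ((ρ i * Pm i).trace).re
      = ∑ i, ((ψ i * (ψ i)ᴴ * Pm i).trace).re :=
        Finset.sum_congr rfl fun i _ => hLHS i _
    _ ≤ ∑ i, ((α : ℂ) * (S * Pm i).trace).re :=
        Finset.sum_le_sum fun i _ => hterm i
    _ = ((α : ℂ) * S.trace).re := hsum1
    _ = ∑ i, p i * ((ρ i * (μ i * (μ i)ᴴ)).trace).re := hRHS.symm
end

section
/- For a geometrically uniform state set with uniform priors, the probability of correctly detecting each state using the least-squares measurement is the same: with ρ_i = U_iφφ*U_i*, W = Σ_i U_iφφ*U_i* positive definite, and Σ_i = μ_iμ_i* where μ_i = W^{-1/2}U_iφ, one has tr(ρ_iΣ_i) = tr(ρ_1Σ_1) for all 1 ≤ i ≤ m; equivalently μ_i*φ_i = μ*φ for all i, where μ = W^{-1/2}φ. -/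
open Matrix
open scoped ComplexOrder

/-- The square root of a positive semidefinite matrix, as `Matrix.PosSemidef.sqrt` was defined
in Mathlib (December 2024); that definition has since been removed from Mathlib. -/
noncomputable def Matrix.PosSemidef.oldSqrt {n : Type*} [Fintype n] [DecidableEq n]
    {A : Matrix n n ℂ} (hA : A.PosSemidef) : Matrix n n ℂ :=
  (hA.1.eigenvectorUnitary : Matrix n n ℂ) * diagonal ((↑) ∘ Real.sqrt ∘ hA.1.eigenvalues) *
    (star hA.1.eigenvectorUnitary : Matrix n n ℂ)

open scoped MatrixOrder in
theorem Matrix.PosSemidef.oldSqrt_eq_cfcSqrt {n : Type*} [Fintype n] [DecidableEq n]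
    {A : Matrix n n ℂ} (hA : A.PosSemidef) : hA.oldSqrt = CFC.sqrt A := by
  rw [CFC.sqrt_eq_cfc, cfc_nnreal_eq_real _ A, hA.1.cfc_eq]
  simp only [IsHermitian.cfc, Matrix.PosSemidef.oldSqrt, Unitary.conjStarAlgAut_apply]
  congr 3
  funext i
  simp [Real.coe_sqrt, Real.coe_toNNReal', max_eq_left (hA.eigenvalues_nonneg i)]

open scoped MatrixOrder in
theorem Matrix.PosSemidef.posSemidef_oldSqrt {n : Type*} [Fintype n] [DecidableEq n]
    {A : Matrix n n ℂ} (hA : A.PosSemidef) : hA.oldSqrt.PosSemidef := by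
  rw [hA.oldSqrt_eq_cfcSqrt, ← nonneg_iff_posSemidef]
  exact CFC.sqrt_nonneg A

open scoped MatrixOrder in
theorem Matrix.PosSemidef.oldSqrt_mul_self {n : Type*} [Fintype n] [DecidableEq n]
    {A : Matrix n n ℂ} (hA : A.PosSemidef) : hA.oldSqrt * hA.oldSqrt = A := by
  rw [hA.oldSqrt_eq_cfcSqrt]
  exact CFC.sqrt_mul_sqrt_self A hA.nonneg

open scoped MatrixOrder in
theorem Matrix.PosSemidef.eq_oldSqrt_of_sq_eq {n : Type*} [Fintype n] [DecidableEq n]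
    {A B : Matrix n n ℂ} (hB : B.PosSemidef) (hA : A.PosSemidef) (h : B ^ 2 = A) :
    B = hA.oldSqrt := by
  rw [hA.oldSqrt_eq_cfcSqrt]
  exact (CFC.sqrt_unique (by rw [← sq, h]) hB.nonneg).symm

/-- for a geometrically uniform state set with uniform priors, the
probability of correctly detecting each state using the least-squares measurement is the
same: `tr(ρ_i Σ_i) = tr(ρ_1 Σ_1)` for all `i`; equivalently `μ_i* φ_i = μ* φ` for all
`i`, where `μ = W^{-1/2} φ`. -/
theorem gu_lsm_equal_detection_probabilities (n m k : ℕ) [NeZero m]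
    (U : Fin m → Matrix (Fin n) (Fin n) ℂ)
    (hUunit : ∀ i, U i ∈ Matrix.unitaryGroup (Fin n) ℂ)
    (hUinj : Function.Injective U)
    (hUone : U 0 = 1)
    (hUmul : ∀ i j, ∃ t, U i * U j = U t)
    (hUinv : ∀ i, ∃ j, (U i)ᴴ = U j)
    (φ : Matrix (Fin n) (Fin k) ℂ)
    (ρ : Fin m → Matrix (Fin n) (Fin n) ℂ)
    (hρdef : ∀ i, ρ i = U i * (φ * φᴴ) * (U i)ᴴ)
    (W : Matrix (Fin n) (Fin n) ℂ)
    (hWdef : W = ∑ i, U i * (φ * φᴴ) * (U i)ᴴ) (hW : W.PosDef)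
    (μ : Fin m → Matrix (Fin n) (Fin k) ℂ)
    (hμ : ∀ i, μ i = (hW.posSemidef.oldSqrt)⁻¹ * (U i * φ)) :
    (∀ i, (ρ i * (μ i * (μ i)ᴴ)).trace = (ρ 0 * (μ 0 * (μ 0)ᴴ)).trace) ∧
    (∀ i, (μ i)ᴴ * (U i * φ) = ((hW.posSemidef.oldSqrt)⁻¹ * φ)ᴴ * φ) := by
  set S := hW.posSemidef.oldSqrt with hS
  -- basic unitary facts
  have hstar : ∀ i, (U i)ᴴ * U i = 1 := fun i => by
    have := (hUunit i).1
    rwa [star_eq_conjTranspose] at this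
  have hcanc : ∀ (p : ℕ) (i : Fin m) (X : Matrix (Fin n) (Fin p) ℂ),
      (U i)ᴴ * (U i * X) = X := by
    intro p i X
    rw [← Matrix.mul_assoc, hstar i, Matrix.one_mul]
  -- W is invariant under conjugation by each U i
  have hWinv : ∀ i, U i * W * (U i)ᴴ = W := by
    intro i
    set f : Fin m → Fin m := fun j => Classical.choose (hUmul i j) with hfdef
    have hf : ∀ j, U i * U j = U (f j) := fun j => Classical.choose_spec (hUmul i j)
    have hfinj : Function.Injective f := by
      intro a b hab
      apply hUinj
      have h1 := hf a
      have h2 := hf b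
      rw [hab] at h1
      have h3 : U i * U a = U i * U b := by rw [h1, h2]
      calc U a = (U i)ᴴ * (U i * U a) := (hcanc n i (U a)).symm
        _ = (U i)ᴴ * (U i * U b) := by rw [h3]
        _ = U b := hcanc n i (U b)
    have hfbij : Function.Bijective f := (Finite.injective_iff_bijective).mp hfinj
    calc U i * W * (U i)ᴴ
        = ∑ j, U i * (U j * (φ * φᴴ) * (U j)ᴴ) * (U i)ᴴ := by
          rw [hWdef, Finset.mul_sum, Finset.sum_mul]
      _ = ∑ j, U (f j) * (φ * φᴴ) * (U (f j))ᴴ := by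
          apply Finset.sum_congr rfl
          intro j _
          rw [← hf j, conjTranspose_mul]
          simp only [Matrix.mul_assoc]
      _ = ∑ t, U t * (φ * φᴴ) * (U t)ᴴ :=
          Fintype.sum_bijective f hfbij _ _ (fun j => rfl)
      _ = W := hWdef.symm
  -- S facts
  have hSherm : Sᴴ = S := hW.posSemidef.posSemidef_oldSqrt.1
  have hSsq : S * S = W := hW.posSemidef.oldSqrt_mul_self
  have hSdet : IsUnit S.det := by
    have hWu : IsUnit W.det := hW.det_pos.ne'.isUnit
    rw [← hSsq, Matrix.det_mul] at hWu
    exact isUnit_of_mul_isUnit_left hWu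
  have hSS : S⁻¹ * S = 1 := Matrix.nonsing_inv_mul S hSdet
  have hSS' : S * S⁻¹ = 1 := Matrix.mul_nonsing_inv S hSdet
  have hTH : (S⁻¹)ᴴ = S⁻¹ := by
    rw [Matrix.conjTranspose_nonsing_inv, hSherm]
  -- each U i commutes with S
  have hcomm : ∀ i, U i * S = S * U i := by
    intro i
    have hpsd : (U i * S * (U i)ᴴ).PosSemidef :=
      hW.posSemidef.posSemidef_oldSqrt.mul_mul_conjTranspose_same (U i)
    have hsq : (U i * S * (U i)ᴴ) ^ 2 = W := by
      have h4 : (U i * S * (U i)ᴴ) ^ 2 = U i * S * ((U i)ᴴ * U i) * S * (U i)ᴴ := by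
        rw [pow_two]; noncomm_ring
      rw [h4, hstar i, mul_one, mul_assoc (U i) S S, hSsq, hWinv i]
    have hconj : U i * S * (U i)ᴴ = S := hpsd.eq_oldSqrt_of_sq_eq hW.posSemidef hsq
    calc U i * S = U i * S * ((U i)ᴴ * U i) := by rw [hstar i, mul_one]
      _ = (U i * S * (U i)ᴴ) * U i := by noncomm_ring
      _ = S * U i := by rw [hconj]
  have hcommInv : ∀ i, U i * S⁻¹ = S⁻¹ * U i := by
    intro i
    have h : S * (U i * S⁻¹) = S * (S⁻¹ * U i) := by
      rw [← mul_assoc, ← hcomm i, mul_assoc, hSS', ← mul_assoc, hSS', mul_one, one_mul]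
    calc U i * S⁻¹ = S⁻¹ * (S * (U i * S⁻¹)) := by rw [← mul_assoc, hSS, one_mul]
      _ = S⁻¹ * (S * (S⁻¹ * U i)) := by rw [h]
      _ = S⁻¹ * U i := by rw [← mul_assoc, hSS, one_mul]
  set ψ : Matrix (Fin n) (Fin k) ℂ := S⁻¹ * φ with hψ
  have hμ' : ∀ i, μ i = U i * ψ := by
    intro i
    rw [hμ i, hψ, ← Matrix.mul_assoc, ← hcommInv i, Matrix.mul_assoc]
  have htr : ∀ i, (ρ i * (μ i * (μ i)ᴴ)).trace = (φ * (φᴴ * (ψ * ψᴴ))).trace := by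
    intro i
    have h1 : ρ i * (μ i * (μ i)ᴴ) = U i * ((φ * (φᴴ * (ψ * ψᴴ))) * (U i)ᴴ) := by
      rw [hρdef i, hμ' i, conjTranspose_mul]
      simp only [Matrix.mul_assoc]
      rw [hcanc n i (ψ * (ψᴴ * (U i)ᴴ))]
    rw [h1, Matrix.trace_mul_comm, Matrix.mul_assoc, hstar i, Matrix.mul_one]
  constructor
  · intro i
    rw [htr i, htr 0]
  · intro i
    rw [hμ' i, conjTranspose_mul, Matrix.mul_assoc, hcanc k i φ]
end

section
/- (Theorem 2, pure-state case) Let {ρ_i = U_i|φ⟩⟨φ|U_i*, 1 ≤ i ≤ m} be a geometrically uniform pure-state ensemble with unit vector |φ⟩ ∈ C^n, uniform priors 1/m, and W = Σ_i U_i|φ⟩⟨φ|U_i* positive definite. Then the least-squares measurement, with vectors |μ_i⟩ = W^{-1/2}U_i|φ⟩ and operators Σ_i = |μ_i⟩⟨μ_i|, minimizes the probability of a detection error: for every POVM {Π_i}, Σ_i (1/m) tr(ρ_iΠ_i) ≤ Σ_i (1/m) tr(ρ_iΣ_i). -/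
open Matrix
open scoped ComplexOrder
open scoped MatrixOrder

section MyHelpers
variable {n : ℕ}

lemma myMul_vecMulVec (M : Matrix (Fin n) (Fin n) ℂ) (a b : Fin n → ℂ) :
    M * vecMulVec a b = vecMulVec (M *ᵥ a) b := by
  ext i j
  simp [mul_apply, vecMulVec_apply, mulVec, dotProduct, Finset.sum_mul, mul_assoc]

lemma myVecMulVec_mul (M : Matrix (Fin n) (Fin n) ℂ) (a b : Fin n → ℂ) :
    vecMulVec a b * M = vecMulVec a (b ᵥ* M) := by
  ext i j
  simp [mul_apply, vecMulVec_apply, vecMul, dotProduct, Finset.mul_sum, mul_assoc]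

lemma myTrace_vecMulVec (a b : Fin n → ℂ) :
    (vecMulVec a b).trace = b ⬝ᵥ a := by
  simp [trace, dotProduct, vecMulVec_apply, mul_comm, diag]

lemma myVecMulVec_mulVec (a b x : Fin n → ℂ) :
    vecMulVec a b *ᵥ x = (b ⬝ᵥ x) • a := by
  ext i
  simp [mulVec, vecMulVec_apply, dotProduct, Finset.sum_mul, Finset.mul_sum, mul_assoc, mul_comm, mul_left_comm]

lemma myDot_shift (A : Matrix (Fin n) (Fin n) ℂ) (x y : Fin n → ℂ) :
    star (A *ᵥ x) ⬝ᵥ y = star x ⬝ᵥ (Aᴴ *ᵥ y) := by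
  rw [star_mulVec, ← dotProduct_mulVec]

lemma myPsd_trace_re_nonneg {A : Matrix (Fin n) (Fin n) ℂ} (hA : A.PosSemidef) :
    0 ≤ A.trace.re := by
  have h : ∀ i, 0 ≤ (A i i).re := by
    intro i
    have h2 := hA.dotProduct_mulVec_nonneg (Pi.single i 1)
    rw [Complex.nonneg_iff] at h2
    have : star (Pi.single i 1 : Fin n → ℂ) ⬝ᵥ (A *ᵥ Pi.single i 1) = A i i := by
      simp [dotProduct, mulVec, Pi.single_apply, Finset.mul_sum, apply_ite]
    rw [this] at h2
    exact h2.1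
  rw [trace, Complex.re_sum]
  exact Finset.sum_nonneg fun i _ => h i

lemma myTrace_mul_psd_nonneg {A B : Matrix (Fin n) (Fin n) ℂ}
    (hA : A.PosSemidef) (hB : B.PosSemidef) : 0 ≤ ((A * B).trace).re := by
  obtain ⟨C, hC⟩ := CStarAlgebra.nonneg_iff_eq_star_mul_self.mp hB.nonneg
  rw [hC, ← Matrix.mul_assoc, Matrix.trace_mul_cycle]
  exact myPsd_trace_re_nonneg (hA.mul_mul_conjTranspose_same C)

lemma myCS (a b : Fin n → ℂ) :
    Complex.normSq (star a ⬝ᵥ b) ≤ (star a ⬝ᵥ a).re * (star b ⬝ᵥ b).re := by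
  let a' : EuclideanSpace ℂ (Fin n) := (WithLp.equiv 2 _).symm a
  let b' : EuclideanSpace ℂ (Fin n) := (WithLp.equiv 2 _).symm b
  have h1 : (inner ℂ a' b' : ℂ) = star a ⬝ᵥ b := by rw [dotProduct_comm]; rfl
  have h2 : (inner ℂ a' a' : ℂ) = star a ⬝ᵥ a := by rw [dotProduct_comm]; rfl
  have h3 : (inner ℂ b' b' : ℂ) = star b ⬝ᵥ b := by rw [dotProduct_comm]; rfl
  have hcs := norm_inner_le_norm (𝕜 := ℂ) a' b'
  have hna : ‖a'‖ ^ 2 = (star a ⬝ᵥ a).re := by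
    rw [← h2]; exact (inner_self_eq_norm_sq (𝕜 := ℂ) a').symm
  have hnb : ‖b'‖ ^ 2 = (star b ⬝ᵥ b).re := by
    rw [← h3]; exact (inner_self_eq_norm_sq (𝕜 := ℂ) b').symm
  calc Complex.normSq (star a ⬝ᵥ b) = ‖star a ⬝ᵥ b‖ ^ 2 := by
        rw [Complex.normSq_eq_norm_sq]
    _ ≤ (‖a'‖ * ‖b'‖) ^ 2 := by
        rw [← h1]; exact pow_le_pow_left₀ (norm_nonneg _) hcs 2
    _ = (star a ⬝ᵥ a).re * (star b ⬝ᵥ b).re := by rw [mul_pow, hna, hnb]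

lemma myPosDef_of_sq {S M : Matrix (Fin n) (Fin n) ℂ} (hS : S.PosSemidef)
    (hSS : S * S = M) (hM : M.PosDef) : S.PosDef := by
  have hdet : IsUnit S.det := by
    have : S.det * S.det = M.det := by rw [← det_mul, hSS]
    have hMdet := hM.det_pos.ne'
    refine isUnit_iff_ne_zero.mpr fun h => hMdet ?_
    rw [← this, h, mul_zero]
  refine PosDef.of_dotProduct_mulVec_pos hS.1 fun x hx => lt_of_le_of_ne (hS.dotProduct_mulVec_nonneg x) fun h0 => hx ?_
  have := (hS.dotProduct_mulVec_zero_iff x).mp h0.symm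
  exact (Matrix.mulVec_injective_iff_isUnit.mpr ((Matrix.isUnit_iff_isUnit_det _).mpr hdet)).eq_iff.mp (by simpa using this)

lemma myTrace_vmv_mul (a b c d : Fin n → ℂ) :
    (vecMulVec a b * vecMulVec c d).trace = (b ⬝ᵥ c) * (d ⬝ᵥ a) := by
  rw [myVecMulVec_mul, myTrace_vecMulVec]
  simp [vecMul, dotProduct, vecMulVec_apply, Finset.sum_mul, Finset.mul_sum]
  apply Finset.sum_congr rfl; intros; apply Finset.sum_congr rfl; intros; ring

lemma mySqrt_eq {A : Matrix (Fin n) (Fin n) ℂ} (hA : A.PosSemidef) :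
    CFC.sqrt A = (hA.1.eigenvectorUnitary : Matrix (Fin n) (Fin n) ℂ) *
      diagonal ((↑) ∘ (√·) ∘ hA.1.eigenvalues) *
      (star hA.1.eigenvectorUnitary : Matrix (Fin n) (Fin n) ℂ) := by
  rw [CFC.sqrt_eq_cfc, cfc_nnreal_eq_real _ A, hA.1.cfc_eq]
  simp only [IsHermitian.cfc, Unitary.conjStarAlgAut_apply]
  congr 3
  funext i
  simp [Real.coe_sqrt, Real.coe_toNNReal', hA.eigenvalues_nonneg i]

end MyHelpers

/-- Theorem 2, pure-state case: for a geometrically uniform pure-state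
ensemble `ρ_i = |φ_i⟩⟨φ_i|` with `|φ_i⟩ = U_i |φ⟩`, `|φ⟩` a unit vector, uniform priors
`1/m`, and `W = ∑_i |φ_i⟩⟨φ_i|` positive definite, the least-squares measurement with
vectors `|μ_i⟩ = W^{-1/2} U_i |φ⟩` and operators `Σ_i = |μ_i⟩⟨μ_i|` minimizes the
probability of a detection error. -/
theorem gu_pure_state_lsm_optimal (n m : ℕ) [NeZero m]
    (U : Fin m → Matrix (Fin n) (Fin n) ℂ)
    (hUunit : ∀ i, U i ∈ Matrix.unitaryGroup (Fin n) ℂ)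
    (hUinj : Function.Injective U)
    (hUone : U 0 = 1)
    (hUmul : ∀ i j, ∃ t, U i * U j = U t)
    (hUinv : ∀ i, ∃ j, (U i)ᴴ = U j)
    (φ : Fin n → ℂ)
    (hφunit : star φ ⬝ᵥ φ = 1)
    (ρ : Fin m → Matrix (Fin n) (Fin n) ℂ)
    (hρdef : ∀ i, ρ i = vecMulVec (U i *ᵥ φ) (star (U i *ᵥ φ)))
    (W : Matrix (Fin n) (Fin n) ℂ)
    (hWdef : W = ∑ i, vecMulVec (U i *ᵥ φ) (star (U i *ᵥ φ))) (hW : W.PosDef)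
    (μ : Fin m → Fin n → ℂ)
    (hμ : ∀ i, μ i = ((hW.isHermitian.eigenvectorUnitary : Matrix (Fin n) (Fin n) ℂ) *
      diagonal ((↑) ∘ (√·) ∘ hW.isHermitian.eigenvalues) *
      (star hW.isHermitian.eigenvectorUnitary : Matrix (Fin n) (Fin n) ℂ))⁻¹ *ᵥ (U i *ᵥ φ)) :
    ∀ Pm : Fin m → Matrix (Fin n) (Fin n) ℂ,
      (∀ i, (Pm i).PosSemidef) → (∑ i, Pm i = 1) →
      ∑ i, (1 / (m : ℝ)) * ((ρ i * Pm i).trace).re ≤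
        ∑ i, (1 / (m : ℝ)) * ((ρ i * vecMulVec (μ i) (star (μ i))).trace).re := by
  intro Pm hPm hPsum
  have hstar : ∀ i, (U i)ᴴ * U i = 1 := fun i => ((Unitary.mem_iff).mp (hUunit i)).1
  -- W is invariant under conjugation by each U i
  have hWU : ∀ i, U i * W * (U i)ᴴ = W := by
    intro i
    choose f hf using hUmul i
    have hfinj : Function.Injective f := by
      intro j j' h
      apply hUinj
      have h1 : U i * U j = U i * U j' := by rw [hf j, h, ← hf j']
      have h2 := congrArg (fun M => (U i)ᴴ * M) h1
      simpa [← Matrix.mul_assoc, hstar i] using h2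
    have hfbij := Finite.injective_iff_bijective.mp hfinj
    rw [hWdef, Finset.mul_sum, Finset.sum_mul]
    calc ∑ j, U i * vecMulVec (U j *ᵥ φ) (star (U j *ᵥ φ)) * (U i)ᴴ
        = ∑ j, vecMulVec (U (f j) *ᵥ φ) (star (U (f j) *ᵥ φ)) := by
          apply Finset.sum_congr rfl; intro j _
          rw [myMul_vecMulVec, myVecMulVec_mul, ← star_mulVec, mulVec_mulVec, hf j]
      _ = ∑ t, vecMulVec (U t *ᵥ φ) (star (U t *ᵥ φ)) :=
          Fintype.sum_bijective f hfbij _ _ (fun j => rfl)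
  have hμ' : ∀ i, μ i = (CFC.sqrt W)⁻¹ *ᵥ (U i *ᵥ φ) := by
    intro i; rw [hμ i, mySqrt_eq hW.posSemidef]
  set S := CFC.sqrt W with hSdef
  have hSpsd : S.PosSemidef := (CFC.sqrt_nonneg W).posSemidef
  have hSS : S * S = W := CFC.sqrt_mul_sqrt_self W hW.posSemidef.nonneg
  have hSpos : S.PosDef := myPosDef_of_sq hSpsd hSS hW
  have hSdet : IsUnit S.det := (Matrix.isUnit_iff_isUnit_det S).mp hSpos.isUnit
  have hSinv1 : S * S⁻¹ = 1 := mul_nonsing_inv _ hSdet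
  have hSinv2 : S⁻¹ * S = 1 := nonsing_inv_mul _ hSdet
  -- U i commutes with S
  have hUS : ∀ i, U i * S = S * U i := by
    intro i
    have hpsd2 : (U i * S * (U i)ᴴ).PosSemidef := hSpsd.mul_mul_conjTranspose_same (U i)
    have hsq : (U i * S * (U i)ᴴ) ^ 2 = W := by
      rw [pow_two]
      calc U i * S * (U i)ᴴ * (U i * S * (U i)ᴴ)
          = U i * S * ((U i)ᴴ * U i) * S * (U i)ᴴ := by
            simp only [Matrix.mul_assoc]
        _ = U i * (S * S) * (U i)ᴴ := by rw [hstar i]; simp only [Matrix.mul_assoc, Matrix.one_mul]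
        _ = W := by rw [hSS]; exact hWU i
    have heq : U i * S * (U i)ᴴ = S := ((CFC.sqrt_eq_iff W _ hW.posSemidef.nonneg hpsd2.nonneg).mpr (by rw [← pow_two]; exact hsq)).symm
    have h2 := congrArg (fun M => M * U i) heq
    simpa [Matrix.mul_assoc, hstar i] using h2
  -- U i commutes with S⁻¹
  have hUSinv : ∀ i, U i * S⁻¹ = S⁻¹ * U i := by
    intro i
    have h1 : S⁻¹ * (U i * S * S⁻¹) = S⁻¹ * (S * U i * S⁻¹) := by rw [hUS i]
    rw [Matrix.mul_assoc (U i) S S⁻¹, hSinv1, Matrix.mul_one, Matrix.mul_assoc S (U i) S⁻¹,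
      ← Matrix.mul_assoc S⁻¹ S (U i * S⁻¹), hSinv2, Matrix.one_mul] at h1
    exact h1.symm
  -- the constant c
  set c : ℂ := star φ ⬝ᵥ (S⁻¹ *ᵥ φ) with hcdef
  have hφne : φ ≠ 0 := by
    intro h; rw [h] at hφunit; simp at hφunit
  have hSinvpos : S⁻¹.PosDef := hSpos.inv
  have hc : 0 < c := hSinvpos.dotProduct_mulVec_pos hφne
  have hcre : 0 < c.re := (Complex.pos_iff.mp hc).1
  have hcim : c.im = 0 := (Complex.pos_iff.mp hc).2.symm
  have hcstar : star c = c := by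
    rw [Complex.star_def, Complex.conj_eq_iff_im]; exact hcim
  -- invariance of c
  have hci : ∀ i, star (U i *ᵥ φ) ⬝ᵥ (S⁻¹ *ᵥ (U i *ᵥ φ)) = c := by
    intro i
    rw [myDot_shift, mulVec_mulVec, mulVec_mulVec]
    congr 2
    rw [Matrix.mul_assoc, ← hUSinv i, ← Matrix.mul_assoc, hstar i, Matrix.one_mul]
  -- trace of S
  have htrS : S.trace = (m : ℂ) * c := by
    have h1 : S = S⁻¹ * W := by rw [← hSS, ← Matrix.mul_assoc, hSinv2, Matrix.one_mul]
    rw [h1, hWdef, Finset.mul_sum, trace_sum]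
    calc ∑ i, (S⁻¹ * vecMulVec (U i *ᵥ φ) (star (U i *ᵥ φ))).trace
        = ∑ _i : Fin m, c := by
          apply Finset.sum_congr rfl; intro i _
          rw [myMul_vecMulVec, myTrace_vecMulVec]
          exact hci i
      _ = (m : ℂ) * c := by
          rw [Finset.sum_const, Finset.card_univ, Fintype.card_fin, nsmul_eq_mul]
  -- hermitian facts
  have hρherm : ∀ i, (ρ i).IsHermitian := by
    intro i
    rw [hρdef]
    ext j k
    simp [conjTranspose_apply, vecMulVec_apply, mul_comm]
  -- the key PSD operator
  have hKey : ∀ i, ((c • S) - ρ i).PosSemidef := by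
    intro i
    refine PosSemidef.of_dotProduct_mulVec_nonneg ?_ ?_
    · have h1 : (c • S).IsHermitian := by
        unfold Matrix.IsHermitian
        rw [conjTranspose_smul, hSpsd.1, hcstar]
      exact h1.sub (hρherm i)
    · intro x
      set vi := U i *ᵥ φ with hvi
      have hq0 := hSpsd.dotProduct_mulVec_nonneg x
      set q := star x ⬝ᵥ (S *ᵥ x) with hqdef
      have hqre : 0 ≤ q.re := (Complex.nonneg_iff.mp hq0).1
      have hqim : q.im = 0 := (Complex.nonneg_iff.mp hq0).2.symm
      set z := star x ⬝ᵥ vi with hzdef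
      have hρx : star x ⬝ᵥ (ρ i *ᵥ x) = z * star z := by
        rw [hρdef, myVecMulVec_mulVec, dotProduct_smul]
        have hst : star z = star vi ⬝ᵥ x := by
          rw [hzdef, star_dotProduct, star_star]
        rw [← hvi, ← hst, smul_eq_mul, ← hzdef, mul_comm]
      -- Cauchy-Schwarz via T = sqrt S
      set T := CFC.sqrt S with hTdef
      have hTpsd : T.PosSemidef := (CFC.sqrt_nonneg S).posSemidef
      have hTT : T * T = S := CFC.sqrt_mul_sqrt_self S hSpsd.nonneg
      have hTpos : T.PosDef := myPosDef_of_sq hTpsd hTT hSpos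
      have hTdet : IsUnit T.det := (Matrix.isUnit_iff_isUnit_det T).mp hTpos.isUnit
      have hTinv1 : T * T⁻¹ = 1 := mul_nonsing_inv _ hTdet
      have hTherm : Tᴴ = T := hTpsd.1
      have hTinvherm : (T⁻¹)ᴴ = T⁻¹ := hTpsd.1.inv
      have ha : star (T *ᵥ x) ⬝ᵥ (T *ᵥ x) = q := by
        rw [myDot_shift, mulVec_mulVec, hTherm, hTT]
      have hb : star (T⁻¹ *ᵥ vi) ⬝ᵥ (T⁻¹ *ᵥ vi) = c := by
        rw [myDot_shift, mulVec_mulVec, hTinvherm]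
        have hTTinv : T⁻¹ * T⁻¹ = S⁻¹ := by rw [← Matrix.mul_inv_rev, hTT]
        rw [hTTinv]
        exact hci i
      have hab : star (T *ᵥ x) ⬝ᵥ (T⁻¹ *ᵥ vi) = z := by
        rw [myDot_shift, mulVec_mulVec, hTherm, hTinv1, Matrix.one_mulVec]
      have hCS := myCS (T *ᵥ x) (T⁻¹ *ᵥ vi)
      rw [ha, hb, hab] at hCS
      -- conclude
      rw [Matrix.sub_mulVec, dotProduct_sub, smul_mulVec, dotProduct_smul, hρx,
        smul_eq_mul]
      have hzz : z * star z = (Complex.normSq z : ℂ) := by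
        rw [Complex.star_def, Complex.mul_conj]
      rw [hzz, Complex.nonneg_iff]
      constructor
      · simp only [Complex.sub_re, Complex.mul_re, Complex.ofReal_re, hcim, hqim]
        nlinarith [hCS]
      · simp only [Complex.sub_im, Complex.ofReal_im, sub_zero]
        rw [Complex.mul_im, hcim, hqim]
        ring
  -- value of the LSM side
  have hRHS : ∀ i, ((ρ i * vecMulVec (μ i) (star (μ i))).trace) = c * c := by
    intro i
    rw [hρdef, myTrace_vmv_mul]
    have h1 : star (U i *ᵥ φ) ⬝ᵥ μ i = c := by rw [hμ', mulVec_mulVec]; rw [← mulVec_mulVec]; exact hci i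
    have h2 : star (μ i) ⬝ᵥ (U i *ᵥ φ) = c := by
      have := congrArg star h1
      rw [star_dotProduct, star_star] at this
      rw [this, hcstar]
    rw [h1, h2]
  have hmne : (m : ℝ) ≠ 0 := Nat.cast_ne_zero.mpr (NeZero.ne m)
  -- rewrite RHS
  have hRHSsum : ∑ i, (1 / (m : ℝ)) * ((ρ i * vecMulVec (μ i) (star (μ i))).trace).re
      = (c * c).re := by
    calc ∑ i, (1 / (m : ℝ)) * ((ρ i * vecMulVec (μ i) (star (μ i))).trace).re
        = ∑ _i : Fin m, (1 / (m : ℝ)) * (c * c).re := by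
          apply Finset.sum_congr rfl; intro i _; rw [hRHS i]
      _ = (m : ℝ) * ((1 / (m : ℝ)) * (c * c).re) := by
          rw [Finset.sum_const, Finset.card_univ, Fintype.card_fin, nsmul_eq_mul]
      _ = (c * c).re := by field_simp
  rw [hRHSsum]
  -- bound LHS
  have hstep : ∀ i, ((ρ i * Pm i).trace).re ≤ (((c • S) * Pm i).trace).re := by
    intro i
    have hd := myTrace_mul_psd_nonneg (hKey i) (hPm i)
    have hsplit : (c • S) * Pm i = ((c • S) - ρ i) * Pm i + ρ i * Pm i := by
      rw [Matrix.sub_mul, sub_add_cancel]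
    rw [hsplit, trace_add, Complex.add_re]
    linarith
  calc ∑ i, (1 / (m : ℝ)) * ((ρ i * Pm i).trace).re
      ≤ ∑ i, (1 / (m : ℝ)) * (((c • S) * Pm i).trace).re := by
        apply Finset.sum_le_sum; intro i _
        have := hstep i
        have hpos : (0:ℝ) < 1 / (m:ℝ) := by positivity
        nlinarith
    _ = (1 / (m : ℝ)) * ((∑ i, (c • S) * Pm i).trace).re := by
        rw [← Finset.mul_sum, trace_sum, Complex.re_sum]
    _ = (1 / (m : ℝ)) * (((c • S) * (1 : Matrix (Fin n) (Fin n) ℂ)).trace).re := by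
        rw [← Finset.mul_sum, hPsum]
    _ = (1 / (m : ℝ)) * ((m : ℝ) * (c * c).re) := by
        rw [Matrix.mul_one, trace_smul, smul_eq_mul, htrS]
        congr 1
        have : c * ((m : ℂ) * c) = (m : ℂ) * (c * c) := by ring
        rw [this]
        simp [Complex.mul_re]
    _ = (c * c).re := by field_simp
end

section
/- Invariance of the optimum under the group action: let {ρ_i = U_iρU_i*} be a geometrically uniform state set with uniform priors, let σ_j : {1,...,m} → {1,...,m} be the permutations defined by U_j*U_i = U_{σ_j(i)}, and let {Π̂_i} be a POVM maximizing Σ_i tr(ρ_iΠ_i) over all POVMs. Then for every j, the matrices Π'_i = U_jΠ̂_{σ_j(i)}U_j* also form a POVM and satisfy Σ_i tr(ρ_iΠ'_i) = Σ_i tr(ρ_iΠ̂_i); hence {Π'_i} is also optimal. -/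
open Matrix
open scoped ComplexOrder

/-!
By cyclicity of the trace, conjugating the measurement by `U_j` is the same as conjugating
every state by `U_j*`, and `U_j* U_i ρ U_i* U_j = ρ_{σ_j(i)}`: the value of the new POVM is the
value of `{Π̂_i}` with its terms relabelled by `σ_j`. Conjugation by a unitary and relabelling
both preserve the POVM conditions, so optimality transfers.
-/

section UnitaryConjugation

variable {n ι : Type*} [Fintype n] [Fintype ι]

theorem trace_conj_mul_conj_eq {V W W' : Matrix n n ℂ} (hW : Vᴴ * W = W')
    (ρ Q : Matrix n n ℂ) :
    (W * ρ * Wᴴ * (V * Q * Vᴴ)).trace = (W' * ρ * W'ᴴ * Q).trace := by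
  calc (W * ρ * Wᴴ * (V * Q * Vᴴ)).trace
      = ((W * ρ * Wᴴ * V * Q) * Vᴴ).trace := by simp only [Matrix.mul_assoc]
    _ = (Vᴴ * (W * ρ * Wᴴ * V * Q)).trace := trace_mul_comm _ _
    _ = ((Vᴴ * W) * ρ * (Vᴴ * W)ᴴ * Q).trace := by
        simp only [conjTranspose_mul, conjTranspose_conjTranspose, Matrix.mul_assoc]
    _ = (W' * ρ * W'ᴴ * Q).trace := by rw [hW]

theorem sum_trace_orbit_mul_conj_comp_perm {U : ι → Matrix n n ℂ} {V : Matrix n n ℂ}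
    {τ : Equiv.Perm ι} (hτ : ∀ i, Vᴴ * U i = U (τ i)) (ρ : Matrix n n ℂ)
    (P : ι → Matrix n n ℂ) :
    ∑ i, (U i * ρ * (U i)ᴴ * (V * P (τ i) * Vᴴ)).trace
      = ∑ i, (U i * ρ * (U i)ᴴ * P i).trace := by
  simp only [trace_conj_mul_conj_eq (hτ _)]
  exact Equiv.sum_comp τ fun i => (U i * ρ * (U i)ᴴ * P i).trace

variable [DecidableEq n]

def IsPOVM (P : ι → Matrix n n ℂ) : Prop :=
  (∀ i, (P i).PosSemidef) ∧ ∑ i, P i = 1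

theorem IsPOVM.unitary_conj_comp_perm {P : ι → Matrix n n ℂ} (hP : IsPOVM P)
    {V : Matrix n n ℂ} (hV : V ∈ unitaryGroup n ℂ) (τ : Equiv.Perm ι) :
    IsPOVM fun i => V * P (τ i) * Vᴴ := by
  refine ⟨fun i => (hP.1 (τ i)).mul_mul_conjTranspose_same V, ?_⟩
  rw [← Finset.sum_mul, ← Finset.mul_sum, Equiv.sum_comp τ P, hP.2, Matrix.mul_one,
    ← star_eq_conjTranspose, mem_unitaryGroup_iff.mp hV]

end UnitaryConjugation

theorem gu_optimum_invariant_under_group_general (n m : ℕ)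
    (U : Fin m → Matrix (Fin n) (Fin n) ℂ)
    (hUunit : ∀ i, U i ∈ Matrix.unitaryGroup (Fin n) ℂ)
    (σ : Fin m → Equiv.Perm (Fin m))
    (hσ : ∀ j i, (U j)ᴴ * U i = U (σ j i))
    (ρ : Matrix (Fin n) (Fin n) ℂ)
    (ρs : Fin m → Matrix (Fin n) (Fin n) ℂ)
    (hρs : ∀ i, ρs i = U i * ρ * (U i)ᴴ)
    (Phat : Fin m → Matrix (Fin n) (Fin n) ℂ)
    (hPhatpsd : ∀ i, (Phat i).PosSemidef) (hPhatsum : ∑ i, Phat i = 1)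
    (hPhatopt : ∀ Pm : Fin m → Matrix (Fin n) (Fin n) ℂ,
      (∀ i, (Pm i).PosSemidef) → (∑ i, Pm i = 1) →
      ∑ i, ((ρs i * Pm i).trace).re ≤ ∑ i, ((ρs i * Phat i).trace).re) :
    ∀ j,
      (∀ i, (U j * Phat (σ j i) * (U j)ᴴ).PosSemidef) ∧
      (∑ i, U j * Phat (σ j i) * (U j)ᴴ = 1) ∧
      (∑ i, (ρs i * (U j * Phat (σ j i) * (U j)ᴴ)).trace =
        ∑ i, (ρs i * Phat i).trace) ∧
      (∀ Pm : Fin m → Matrix (Fin n) (Fin n) ℂ,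
        (∀ i, (Pm i).PosSemidef) → (∑ i, Pm i = 1) →
        ∑ i, ((ρs i * Pm i).trace).re ≤
          ∑ i, ((ρs i * (U j * Phat (σ j i) * (U j)ᴴ)).trace).re) := by
  intro j
  have hPOVM : IsPOVM fun i => U j * Phat (σ j i) * (U j)ᴴ :=
    IsPOVM.unitary_conj_comp_perm ⟨hPhatpsd, hPhatsum⟩ (hUunit j) (σ j)
  have hvalue : ∑ i, (ρs i * (U j * Phat (σ j i) * (U j)ᴴ)).trace
      = ∑ i, (ρs i * Phat i).trace := by
    simp only [hρs]
    exact sum_trace_orbit_mul_conj_comp_perm (hσ j) ρ Phat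
  refine ⟨hPOVM.1, hPOVM.2, hvalue, fun Pm hPm hsum => ?_⟩
  simpa only [← Complex.re_sum, hvalue] using hPhatopt Pm hPm hsum

/-- invariance of the optimum under the group action: if `{Π̂_i}` is a
POVM maximizing `∑ tr(ρ_i Π_i)` for a geometrically uniform state set `ρ_i = U_i ρ U_i*`
and `σ_j` are the permutations with `U_j* U_i = U_{σ_j(i)}`, then for every `j` the
matrices `Π'_i = U_j Π̂_{σ_j(i)} U_j*` also form a POVM, attain the same value
`∑ tr(ρ_i Π'_i) = ∑ tr(ρ_i Π̂_i)`, and hence are also optimal. -/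
theorem gu_optimum_invariant_under_group (n m : ℕ) [NeZero m]
    (U : Fin m → Matrix (Fin n) (Fin n) ℂ)
    (hUunit : ∀ i, U i ∈ Matrix.unitaryGroup (Fin n) ℂ)
    (hUinj : Function.Injective U)
    (hUone : U 0 = 1)
    (hUmul : ∀ i j, ∃ t, U i * U j = U t)
    (hUinv : ∀ i, ∃ j, (U i)ᴴ = U j)
    (σ : Fin m → Equiv.Perm (Fin m))
    (hσ : ∀ j i, (U j)ᴴ * U i = U (σ j i))
    (ρ : Matrix (Fin n) (Fin n) ℂ)
    (hρpsd : ρ.PosSemidef) (hρtr : ρ.trace = 1)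
    (ρs : Fin m → Matrix (Fin n) (Fin n) ℂ)
    (hρs : ∀ i, ρs i = U i * ρ * (U i)ᴴ)
    (Phat : Fin m → Matrix (Fin n) (Fin n) ℂ)
    (hPhatpsd : ∀ i, (Phat i).PosSemidef) (hPhatsum : ∑ i, Phat i = 1)
    (hPhatopt : ∀ Pm : Fin m → Matrix (Fin n) (Fin n) ℂ,
      (∀ i, (Pm i).PosSemidef) → (∑ i, Pm i = 1) →
      ∑ i, ((ρs i * Pm i).trace).re ≤ ∑ i, ((ρs i * Phat i).trace).re) :
    ∀ j,
      (∀ i, (U j * Phat (σ j i) * (U j)ᴴ).PosSemidef) ∧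
      (∑ i, U j * Phat (σ j i) * (U j)ᴴ = 1) ∧
      (∑ i, (ρs i * (U j * Phat (σ j i) * (U j)ᴴ)).trace =
        ∑ i, (ρs i * Phat i).trace) ∧
      (∀ Pm : Fin m → Matrix (Fin n) (Fin n) ℂ,
        (∀ i, (Pm i).PosSemidef) → (∑ i, Pm i = 1) →
        ∑ i, ((ρs i * Pm i).trace).re ≤
          ∑ i, ((ρs i * (U j * Phat (σ j i) * (U j)ᴴ)).trace).re) :=
  gu_optimum_invariant_under_group_general n m U hUunit σ hσ ρ ρs hρs Phat hPhatpsd hPhatsum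
    hPhatopt
end

section
/- (Theorem 2, existence of a GU optimal measurement) For a geometrically uniform state set {ρ_i = U_iρU_i*, 1 ≤ i ≤ m} with uniform priors, there exists an optimal POVM that is geometrically uniform with the same generating group: there is a positive semidefinite Hermitian matrix Π̂ such that the operators Π̄_i = U_iΠ̂U_i* form a POVM and Σ_i tr(ρ_iΠ̄_i) ≥ Σ_i tr(ρ_iΠ_i) for every POVM {Π_i}. Specifically, if {Π̂_i} is any optimal POVM, one may take Π̂ = (1/m)Σ_{k=1}^m U_k*Π̂_kU_k. -/
open Matrix
open scoped ComplexOrder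

/-- A nonnegative real scalar multiple of a PSD matrix is PSD. -/
lemma psd_smul_of_nonneg {k : ℕ} {c : ℂ} (hc : 0 ≤ c)
    {M : Matrix (Fin k) (Fin k) ℂ} (hM : M.PosSemidef) : (c • M).PosSemidef := by
  constructor
  · have hcr : star c = c := by
      rw [Complex.star_def, Complex.conj_eq_iff_im]
      exact ((Complex.le_def.mp hc).2).symm
    unfold Matrix.IsHermitian
    rw [Matrix.conjTranspose_smul, hcr, hM.1]
  · intro x
    have h := hM.2 x
    calc (0 : ℂ) = c * 0 := by ring
    _ ≤ c * (x.sum fun i xi => x.sum fun j xj => star xi * M i j * xj) :=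
        mul_le_mul_of_nonneg_left h hc
    _ = (x.sum fun i xi => x.sum fun j xj => star xi * (c • M) i j * xj) := by
        simp only [Finsupp.sum, Finset.mul_sum, Matrix.smul_apply, smul_eq_mul]
        exact Finset.sum_congr rfl fun i _ => Finset.sum_congr rfl fun j _ => by ring

/-- A finite sum of PSD matrices is PSD. -/
lemma psd_sum {k m : ℕ} {f : Fin m → Matrix (Fin k) (Fin k) ℂ}
    (hf : ∀ i, (f i).PosSemidef) : (∑ i, f i).PosSemidef := by
  classical
  refine Finset.sum_induction f Matrix.PosSemidef
    (fun A B hA hB => hA.add hB) Matrix.PosSemidef.zero (fun i _ => hf i)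

/-- Theorem 2, existence of a GU optimal measurement: for a geometrically
uniform state set `ρ_i = U_i ρ U_i*` with uniform priors, there is a positive semidefinite
Hermitian matrix `Π̂` such that the operators `Π̄_i = U_i Π̂ U_i*` form a POVM that is
optimal; specifically, given any optimal POVM `{Π̂_i}` one may take
`Π̂ = (1/m) ∑_k U_k* Π̂_k U_k`. -/
theorem gu_optimal_povm_is_gu (n m : ℕ) [NeZero m]
    (U : Fin m → Matrix (Fin n) (Fin n) ℂ)
    (hUunit : ∀ i, U i ∈ Matrix.unitaryGroup (Fin n) ℂ)
    (hUinj : Function.Injective U)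
    (hUone : U 0 = 1)
    (hUmul : ∀ i j, ∃ t, U i * U j = U t)
    (hUinv : ∀ i, ∃ j, (U i)ᴴ = U j)
    (ρ : Matrix (Fin n) (Fin n) ℂ)
    (hρpsd : ρ.PosSemidef) (hρtr : ρ.trace = 1)
    (ρs : Fin m → Matrix (Fin n) (Fin n) ℂ)
    (hρs : ∀ i, ρs i = U i * ρ * (U i)ᴴ)
    (Phat : Fin m → Matrix (Fin n) (Fin n) ℂ)
    (hPhatpsd : ∀ i, (Phat i).PosSemidef) (hPhatsum : ∑ i, Phat i = 1)
    (hPhatopt : ∀ Pm : Fin m → Matrix (Fin n) (Fin n) ℂ,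
      (∀ i, (Pm i).PosSemidef) → (∑ i, Pm i = 1) →
      ∑ i, ((ρs i * Pm i).trace).re ≤ ∑ i, ((ρs i * Phat i).trace).re)
    (Pbar : Matrix (Fin n) (Fin n) ℂ)
    (hPbar : Pbar = ((m : ℂ))⁻¹ • ∑ t, (U t)ᴴ * Phat t * U t) :
    Pbar.PosSemidef ∧
    (∀ i, (U i * Pbar * (U i)ᴴ).PosSemidef) ∧
    (∑ i, U i * Pbar * (U i)ᴴ = 1) ∧
    (∀ Pm : Fin m → Matrix (Fin n) (Fin n) ℂ,
      (∀ i, (Pm i).PosSemidef) → (∑ i, Pm i = 1) →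
      ∑ i, ((ρs i * Pm i).trace).re ≤
        ∑ i, ((ρs i * (U i * Pbar * (U i)ᴴ)).trace).re) := by
  have hmC : (m : ℂ) ≠ 0 := Nat.cast_ne_zero.mpr (NeZero.ne m)
  have hstar : ∀ i, (U i)ᴴ * U i = 1 := by
    intro i
    have := (hUunit i).1
    rwa [Matrix.star_eq_conjTranspose] at this
  have hstar' : ∀ i, U i * (U i)ᴴ = 1 := by
    intro i
    have := (hUunit i).2
    rwa [Matrix.star_eq_conjTranspose] at this
  -- Pbar is PSD
  have hPbarpsd : Pbar.PosSemidef := by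
    rw [hPbar]
    refine psd_smul_of_nonneg ?_ (psd_sum fun t => (hPhatpsd t).conjTranspose_mul_mul_same (U t))
    have : ((m : ℂ))⁻¹ = (((m : ℝ)⁻¹ : ℝ) : ℂ) := by push_cast; ring
    rw [this, Complex.zero_le_real]
    positivity
  -- the conjugates are PSD
  have hconjpsd : ∀ i, (U i * Pbar * (U i)ᴴ).PosSemidef :=
    fun i => hPbarpsd.mul_mul_conjTranspose_same (U i)
  -- key reindexing lemma
  have key : ∀ t : Fin m, ∑ i, U i * ((U t)ᴴ * Phat t * U t) * (U i)ᴴ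
      = ∑ j, U j * Phat t * (U j)ᴴ := by
    intro t
    obtain ⟨s, hs⟩ := hUinv t
    choose f hfU using fun i => hUmul i s
    have hfi : Function.Injective f := by
      intro a b hab
      apply hUinj
      have h1 : U a * U s = U b * U s := by rw [hfU a, hfU b, hab]
      have h2 : U a * (U s * (U s)ᴴ) = U b * (U s * (U s)ᴴ) := by
        rw [← Matrix.mul_assoc, ← Matrix.mul_assoc, h1]
      rwa [hstar' s, Matrix.mul_one, Matrix.mul_one] at h2
    have hfb : Function.Bijective f := Finite.injective_iff_bijective.mp hfi
    calc ∑ i, U i * ((U t)ᴴ * Phat t * U t) * (U i)ᴴ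
        = ∑ i, U (f i) * Phat t * (U (f i))ᴴ := by
          refine Finset.sum_congr rfl fun i _ => ?_
          rw [← hfU i, ← hs, Matrix.conjTranspose_mul, Matrix.conjTranspose_conjTranspose]
          simp only [Matrix.mul_assoc]
      _ = ∑ j, U j * Phat t * (U j)ᴴ :=
          Fintype.sum_bijective f hfb _ _ (fun i => rfl)
  -- the conjugates sum to 1
  have hsum1 : ∑ i, U i * Pbar * (U i)ᴴ = 1 := by
    have expand : ∑ i, U i * Pbar * (U i)ᴴ
        = (m : ℂ)⁻¹ • ∑ i, ∑ t, U i * ((U t)ᴴ * Phat t * U t) * (U i)ᴴ := by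
      simp only [hPbar, Matrix.mul_smul, Matrix.smul_mul, Finset.smul_sum,
        Finset.mul_sum, Finset.sum_mul]
    rw [expand]
    have : ∑ i, ∑ t, U i * ((U t)ᴴ * Phat t * U t) * (U i)ᴴ
        = (m : ℂ) • (1 : Matrix (Fin n) (Fin n) ℂ) := by
      rw [Finset.sum_comm]
      calc ∑ t, ∑ i, U i * ((U t)ᴴ * Phat t * U t) * (U i)ᴴ
          = ∑ t, ∑ j, U j * Phat t * (U j)ᴴ := Finset.sum_congr rfl fun t _ => key t
        _ = ∑ j, ∑ t, U j * Phat t * (U j)ᴴ := Finset.sum_comm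
        _ = ∑ j : Fin m, (1 : Matrix (Fin n) (Fin n) ℂ) := by
            refine Finset.sum_congr rfl fun j _ => ?_
            rw [← Finset.sum_mul, ← Finset.mul_sum, hPhatsum, Matrix.mul_one, hstar' j]
        _ = (m : ℂ) • 1 := by
            rw [Finset.sum_const, Finset.card_univ, Fintype.card_fin]
            rw [Nat.cast_smul_eq_nsmul]
    rw [this, smul_smul, inv_mul_cancel₀ hmC, one_smul]
  -- the value of the GU POVM equals the optimal value
  have hval : ∑ i, ((ρs i * (U i * Pbar * (U i)ᴴ)).trace)
      = ∑ i, ((ρs i * Phat i).trace) := by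
    have h1 : ∀ i, (ρs i * (U i * Pbar * (U i)ᴴ)).trace = (ρ * Pbar).trace := by
      intro i
      rw [hρs i]
      have heq : U i * ρ * (U i)ᴴ * (U i * Pbar * (U i)ᴴ)
          = U i * (ρ * Pbar) * (U i)ᴴ := by
        calc U i * ρ * (U i)ᴴ * (U i * Pbar * (U i)ᴴ)
            = U i * ρ * ((U i)ᴴ * U i) * (Pbar * (U i)ᴴ) := by
              simp only [Matrix.mul_assoc]
          _ = U i * (ρ * Pbar) * (U i)ᴴ := by
              rw [hstar i, Matrix.mul_one]
              simp only [Matrix.mul_assoc]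
      rw [heq, Matrix.trace_mul_comm, ← Matrix.mul_assoc, hstar i, Matrix.one_mul]
    have h2 : ∀ t : Fin m, (ρ * ((U t)ᴴ * Phat t * U t)).trace = (ρs t * Phat t).trace := by
      intro t
      rw [hρs t]
      have heq : ρ * ((U t)ᴴ * Phat t * U t) = (ρ * (U t)ᴴ * Phat t) * U t := by
        simp only [Matrix.mul_assoc]
      rw [heq, Matrix.trace_mul_comm]
      congr 1
      simp only [Matrix.mul_assoc]
    have h3 : (ρ * Pbar).trace = (m : ℂ)⁻¹ * ∑ t, (ρs t * Phat t).trace := by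
      rw [hPbar, Matrix.mul_smul, Matrix.trace_smul, Finset.mul_sum, Matrix.trace_sum,
        Finset.mul_sum, smul_eq_mul, Finset.mul_sum]
      exact Finset.sum_congr rfl fun t _ => by rw [h2 t]
    calc ∑ i, ((ρs i * (U i * Pbar * (U i)ᴴ)).trace)
        = ∑ _i : Fin m, (ρ * Pbar).trace := Finset.sum_congr rfl fun i _ => h1 i
      _ = (m : ℂ) * (ρ * Pbar).trace := by
          rw [Finset.sum_const, Finset.card_univ, Fintype.card_fin, nsmul_eq_mul]
      _ = ∑ i, ((ρs i * Phat i).trace) := by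
          rw [h3, ← mul_assoc, mul_inv_cancel₀ hmC, one_mul]
  refine ⟨hPbarpsd, hconjpsd, hsum1, fun Pm hPmpsd hPmsum => ?_⟩
  have := hPhatopt Pm hPmpsd hPmsum
  have hre : ∑ i, ((ρs i * (U i * Pbar * (U i)ᴴ)).trace).re
      = ∑ i, ((ρs i * Phat i).trace).re := by
    have := congrArg Complex.re hval
    simpa [Complex.re_sum] using this
  linarith
end

section
/- Reduction of the GU detection problem to a semidefinite program: for a geometrically uniform state set {ρ_i = U_iρU_i*, 1 ≤ i ≤ m}, the maximum of Σ_{i=1}^m tr(ρ_iΠ_i) over all POVMs {Π_i} equals the maximum of m·tr(ρΠ) over all positive semidefinite Hermitian matrices Π satisfying Σ_{i=1}^m U_iΠU_i* = I; moreover, if Π achieves the latter maximum then the POVM {Π_i = U_iΠU_i*} achieves the former. -/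
open Matrix
open scoped ComplexOrder

set_option maxHeartbeats 1000000

lemma psd_smul_real {n : ℕ} {A : Matrix (Fin n) (Fin n) ℂ} (hA : A.PosSemidef)
    {c : ℝ} (hc : 0 ≤ c) : ((c : ℂ) • A).PosSemidef := by
  refine posSemidef_iff_dotProduct_mulVec.mpr ⟨?_, ?_⟩
  · have h := hA.1
    unfold Matrix.IsHermitian at h ⊢
    rw [conjTranspose_smul, h]
    congr 1
    simp
  · intro x
    rw [smul_mulVec, dotProduct_smul, smul_eq_mul]
    exact mul_nonneg (by exact_mod_cast hc) (hA.dotProduct_mulVec_nonneg x)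

/-- reduction of the GU detection problem to a semidefinite program: for a
geometrically uniform state set `ρ_i = U_i ρ U_i*`, the supremum of `∑ tr(ρ_i Π_i)` over
all POVMs `{Π_i}` equals the supremum of `m·tr(ρ Π)` over all positive semidefinite
Hermitian `Π` with `∑ U_i Π U_i* = I`; moreover, if `Π` achieves the latter maximum then
the POVM `{Π_i = U_i Π U_i*}` achieves the former. -/
theorem gu_detection_reduces_to_sdp (n m : ℕ) [NeZero m]
    (U : Fin m → Matrix (Fin n) (Fin n) ℂ)
    (hUunit : ∀ i, U i ∈ Matrix.unitaryGroup (Fin n) ℂ)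
    (hUinj : Function.Injective U)
    (hUone : U 0 = 1)
    (hUmul : ∀ i j, ∃ t, U i * U j = U t)
    (hUinv : ∀ i, ∃ j, (U i)ᴴ = U j)
    (ρ : Matrix (Fin n) (Fin n) ℂ)
    (hρpsd : ρ.PosSemidef) (hρtr : ρ.trace = 1)
    (ρs : Fin m → Matrix (Fin n) (Fin n) ℂ)
    (hρs : ∀ i, ρs i = U i * ρ * (U i)ᴴ) :
    (sSup {x : ℝ | ∃ Pm : Fin m → Matrix (Fin n) (Fin n) ℂ,
        (∀ i, (Pm i).PosSemidef) ∧ (∑ i, Pm i = 1) ∧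
        x = ∑ i, ((ρs i * Pm i).trace).re} =
      sSup {x : ℝ | ∃ P : Matrix (Fin n) (Fin n) ℂ,
        P.PosSemidef ∧ (∑ i, U i * P * (U i)ᴴ = 1) ∧
        x = (m : ℝ) * ((ρ * P).trace).re}) ∧
    (∀ P : Matrix (Fin n) (Fin n) ℂ, P.PosSemidef → (∑ i, U i * P * (U i)ᴴ = 1) →
      (∀ P' : Matrix (Fin n) (Fin n) ℂ, P'.PosSemidef → (∑ i, U i * P' * (U i)ᴴ = 1) →
        (m : ℝ) * ((ρ * P').trace).re ≤ (m : ℝ) * ((ρ * P).trace).re) →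
      (∀ i, (U i * P * (U i)ᴴ).PosSemidef) ∧ (∑ i, U i * P * (U i)ᴴ = 1) ∧
      (∀ Pm : Fin m → Matrix (Fin n) (Fin n) ℂ,
        (∀ i, (Pm i).PosSemidef) → (∑ i, Pm i = 1) →
        ∑ i, ((ρs i * Pm i).trace).re ≤
          ∑ i, ((ρs i * (U i * P * (U i)ᴴ)).trace).re)) := by
  have hm0 : (m : ℝ) ≠ 0 := Nat.cast_ne_zero.mpr (NeZero.ne m)
  have hU1 : ∀ i, (U i)ᴴ * U i = 1 := fun i => by
    simpa [Matrix.star_eq_conjTranspose] using (Matrix.mem_unitaryGroup_iff').mp (hUunit i)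
  have hU2 : ∀ i, U i * (U i)ᴴ = 1 := fun i => by
    simpa [Matrix.star_eq_conjTranspose] using (Matrix.mem_unitaryGroup_iff).mp (hUunit i)
  -- trace lemma A : tr(ρs i · U_i X U_i*) = tr(ρ X)
  have traceA : ∀ (i : Fin m) (X : Matrix (Fin n) (Fin n) ℂ),
      (ρs i * (U i * X * (U i)ᴴ)).trace = (ρ * X).trace := by
    intro i X
    rw [hρs]
    have h : U i * ρ * (U i)ᴴ * (U i * X * (U i)ᴴ) = U i * (ρ * X) * (U i)ᴴ := by
      simp only [Matrix.mul_assoc]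
      rw [← Matrix.mul_assoc ((U i)ᴴ) (U i), hU1 i, Matrix.one_mul]
    rw [h, Matrix.trace_mul_cycle, ← Matrix.mul_assoc, hU1 i, Matrix.one_mul]
  -- trace lemma B : tr(ρ · U_i* X U_i) = tr(ρs i · X)
  have traceB : ∀ (i : Fin m) (X : Matrix (Fin n) (Fin n) ℂ),
      (ρ * ((U i)ᴴ * X * U i)).trace = (ρs i * X).trace := by
    intro i X
    rw [hρs]
    rw [show ρ * ((U i)ᴴ * X * U i) = (ρ * (U i)ᴴ * X) * U i from by
      simp only [Matrix.mul_assoc], Matrix.trace_mul_comm]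
    congr 1
    simp only [Matrix.mul_assoc]
  -- resummation over the group
  have sumConj : ∀ (i : Fin m) (X : Matrix (Fin n) (Fin n) ℂ),
      ∑ j, U j * ((U i)ᴴ * X * U i) * (U j)ᴴ = ∑ t, U t * X * (U t)ᴴ := by
    intro i X
    obtain ⟨k, hk⟩ := hUinv i
    have hUi : U i = (U k)ᴴ := by rw [← hk, conjTranspose_conjTranspose]
    choose f hf using fun j => hUmul j k
    have hfinj : Function.Injective f := by
      intro a b hab
      apply hUinj
      have h : U a * U k = U b * U k := by rw [hf a, hf b, hab]
      calc U a = U a * U k * (U k)ᴴ := by rw [Matrix.mul_assoc, hU2 k, Matrix.mul_one]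
        _ = U b * U k * (U k)ᴴ := by rw [h]
        _ = U b := by rw [Matrix.mul_assoc, hU2 k, Matrix.mul_one]
    have hfb := Finite.injective_iff_bijective.mp hfinj
    calc ∑ j, U j * ((U i)ᴴ * X * U i) * (U j)ᴴ
        = ∑ j, U (f j) * X * (U (f j))ᴴ := by
          refine Finset.sum_congr rfl fun j _ => ?_
          rw [← hf j, hk, hUi, Matrix.conjTranspose_mul]
          simp only [Matrix.mul_assoc]
      _ = ∑ t, U t * X * (U t)ᴴ :=
          Fintype.sum_bijective f hfb _ _ (fun j => rfl)
  -- the averaged operator is PSD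
  have avgPSD : ∀ Pm : Fin m → Matrix (Fin n) (Fin n) ℂ, (∀ i, (Pm i).PosSemidef) →
      ((m : ℂ)⁻¹ • ∑ i, (U i)ᴴ * Pm i * U i).PosSemidef := by
    intro Pm h
    have hS : (∑ i, (U i)ᴴ * Pm i * U i).PosSemidef := by
      apply Finset.sum_induction _ _ (fun a b ha hb => ha.add hb) Matrix.PosSemidef.zero
      intro i _
      simpa using (h i).mul_mul_conjTranspose_same (U i)ᴴ
    have hc : (0:ℝ) ≤ (m:ℝ)⁻¹ := by positivity
    have := psd_smul_real hS hc
    rw [show (((m:ℝ)⁻¹ : ℝ) : ℂ) = (m : ℂ)⁻¹ from by push_cast; ring] at this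
    exact this
  -- the averaged operator is feasible
  have avgFeas : ∀ Pm : Fin m → Matrix (Fin n) (Fin n) ℂ, (∑ i, Pm i = 1) →
      ∑ j, U j * ((m : ℂ)⁻¹ • ∑ i, (U i)ᴴ * Pm i * U i) * (U j)ᴴ = 1 := by
    intro Pm hPm1
    have step : ∑ j, U j * (∑ i, (U i)ᴴ * Pm i * U i) * (U j)ᴴ
        = (m : ℂ) • (1 : Matrix (Fin n) (Fin n) ℂ) := by
      calc ∑ j, U j * (∑ i, (U i)ᴴ * Pm i * U i) * (U j)ᴴ
          = ∑ j, ∑ i, U j * ((U i)ᴴ * Pm i * U i) * (U j)ᴴ := by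
            refine Finset.sum_congr rfl fun j _ => ?_
            rw [Finset.mul_sum, Finset.sum_mul]
        _ = ∑ i, ∑ j, U j * ((U i)ᴴ * Pm i * U i) * (U j)ᴴ := Finset.sum_comm
        _ = ∑ i, ∑ t, U t * Pm i * (U t)ᴴ := by
            exact Finset.sum_congr rfl fun i _ => sumConj i (Pm i)
        _ = ∑ t, U t * (∑ i, Pm i) * (U t)ᴴ := by
            rw [Finset.sum_comm]
            refine Finset.sum_congr rfl fun t _ => ?_
            rw [Finset.mul_sum, Finset.sum_mul]
        _ = ∑ t : Fin m, (1 : Matrix (Fin n) (Fin n) ℂ) := by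
            rw [hPm1]
            exact Finset.sum_congr rfl fun t _ => by rw [Matrix.mul_one, hU2 t]
        _ = (m : ℂ) • (1 : Matrix (Fin n) (Fin n) ℂ) := by
            rw [Finset.sum_const, Finset.card_univ, Fintype.card_fin,
              Nat.cast_smul_eq_nsmul]
    calc ∑ j, U j * ((m : ℂ)⁻¹ • ∑ i, (U i)ᴴ * Pm i * U i) * (U j)ᴴ
        = ∑ j, (m : ℂ)⁻¹ • (U j * (∑ i, (U i)ᴴ * Pm i * U i) * (U j)ᴴ) :=
          Finset.sum_congr rfl fun j _ => by rw [Matrix.mul_smul, Matrix.smul_mul]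
      _ = (m : ℂ)⁻¹ • ∑ j, U j * (∑ i, (U i)ᴴ * Pm i * U i) * (U j)ᴴ :=
          (Finset.smul_sum).symm
      _ = 1 := by
          rw [step, smul_smul, inv_mul_cancel₀ (by exact_mod_cast hm0), one_smul]
  -- value of the averaged operator
  have avgVal : ∀ Pm : Fin m → Matrix (Fin n) (Fin n) ℂ,
      (m : ℝ) * ((ρ * ((m : ℂ)⁻¹ • ∑ i, (U i)ᴴ * Pm i * U i)).trace).re
        = ∑ i, ((ρs i * Pm i).trace).re := by
    intro Pm
    have h1 : (ρ * ((m : ℂ)⁻¹ • ∑ i, (U i)ᴴ * Pm i * U i)).trace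
        = (m : ℂ)⁻¹ * ∑ i, (ρs i * Pm i).trace := by
      rw [Matrix.mul_smul, Matrix.trace_smul, smul_eq_mul, Finset.mul_sum,
        Matrix.trace_sum]
      congr 1
      exact Finset.sum_congr rfl fun i _ => traceB i (Pm i)
    rw [h1, show ((m : ℂ)⁻¹) = (((m : ℝ)⁻¹ : ℝ) : ℂ) from by push_cast; ring]
    rw [Complex.re_ofReal_mul, ← mul_assoc, mul_inv_cancel₀ hm0, one_mul,
      Complex.re_sum]
  -- value of the conjugated POVM
  have conjVal : ∀ P : Matrix (Fin n) (Fin n) ℂ,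
      ∑ i, ((ρs i * (U i * P * (U i)ᴴ)).trace).re = (m : ℝ) * ((ρ * P).trace).re := by
    intro P
    calc ∑ i, ((ρs i * (U i * P * (U i)ᴴ)).trace).re
        = ∑ _i : Fin m, ((ρ * P).trace).re :=
          Finset.sum_congr rfl fun i _ => by rw [traceA i P]
      _ = (m : ℝ) * ((ρ * P).trace).re := by
          rw [Finset.sum_const, Finset.card_univ, Fintype.card_fin, nsmul_eq_mul]
  -- the two feasible value sets coincide
  have AeqB : {x : ℝ | ∃ Pm : Fin m → Matrix (Fin n) (Fin n) ℂ,
        (∀ i, (Pm i).PosSemidef) ∧ (∑ i, Pm i = 1) ∧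
        x = ∑ i, ((ρs i * Pm i).trace).re} =
      {x : ℝ | ∃ P : Matrix (Fin n) (Fin n) ℂ,
        P.PosSemidef ∧ (∑ i, U i * P * (U i)ᴴ = 1) ∧
        x = (m : ℝ) * ((ρ * P).trace).re} := by
    ext x
    constructor
    · rintro ⟨Pm, hPmpsd, hPm1, rfl⟩
      exact ⟨(m : ℂ)⁻¹ • ∑ i, (U i)ᴴ * Pm i * U i, avgPSD Pm hPmpsd,
        avgFeas Pm hPm1, (avgVal Pm).symm⟩
    · rintro ⟨P, hPpsd, hPfeas, rfl⟩
      exact ⟨fun i => U i * P * (U i)ᴴ,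
        fun i => hPpsd.mul_mul_conjTranspose_same (U i), hPfeas, (conjVal P).symm⟩
  constructor
  · exact congrArg sSup AeqB
  · intro P hPpsd hPfeas hopt
    refine ⟨fun i => hPpsd.mul_mul_conjTranspose_same (U i), hPfeas, ?_⟩
    intro Pm hPmpsd hPm1
    calc ∑ i, ((ρs i * Pm i).trace).re
        = (m : ℝ) * ((ρ * ((m : ℂ)⁻¹ • ∑ i, (U i)ᴴ * Pm i * U i)).trace).re :=
          (avgVal Pm).symm
      _ ≤ (m : ℝ) * ((ρ * P).trace).re :=
          hopt _ (avgPSD Pm hPmpsd) (avgFeas Pm hPm1)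
      _ = ∑ i, ((ρs i * (U i * P * (U i)ᴴ)).trace).re := (conjVal P).symm
end

section
/- (Theorem 3, rank-one CGU with commuting GU generators) Let G = {U_1,...,U_l} and Q = {V_1,...,V_r} be finite groups of n×n unitary matrices such that for all i, k there is a real phase θ(i,k) with U_iV_k = e^{jθ(i,k)}V_kU_i, and let |φ⟩ ∈ C^n be a unit vector. Consider the pure-state ensemble ρ_{ik} = |φ_{ik}⟩⟨φ_{ik}| with |φ_{ik}⟩ = U_iV_k|φ⟩, uniform priors 1/(lr), and assume W = Σ_{i,k} |φ_{ik}⟩⟨φ_{ik}| is positive definite. Then the least-squares measurement, with vectors |μ_{ik}⟩ = W^{-1/2}|φ_{ik}⟩ and operators Σ_{ik} = |μ_{ik}⟩⟨μ_{ik}|, minimizes the probability of a detection error: for every POVM {Π_{ik}}, Σ_{i,k} (1/(lr)) tr(ρ_{ik}Π_{ik}) ≤ Σ_{i,k} (1/(lr)) tr(ρ_{ik}Σ_{ik}). -/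
open Matrix
open scoped ComplexOrder

/-- The square root `Matrix.PosSemidef.sqrt` of the older Mathlib (since removed), spelled out
with its old definition: `U * diagonal (√eigenvalues) * U*`. -/
noncomputable def posSemidefSqrt {n : Type*} [Fintype n] [DecidableEq n]
    (A : Matrix n n ℂ) (hA : A.IsHermitian) : Matrix n n ℂ :=
  (hA.eigenvectorUnitary : Matrix n n ℂ) * diagonal ((↑) ∘ Real.sqrt ∘ hA.eigenvalues) *
    (star hA.eigenvectorUnitary : Matrix n n ℂ)

namespace CGUAux

variable {n : ℕ}

open scoped MatrixOrder in
lemma posSemidefSqrt_eq (A : Matrix (Fin n) (Fin n) ℂ) (hA : A.PosSemidef) :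
    posSemidefSqrt A hA.1 = CFC.sqrt A := by
  have hf : (fun x : ℝ => ((NNReal.sqrt x.toNNReal : NNReal) : ℝ)) = Real.sqrt := by
    funext x
    rw [Real.coe_sqrt, Real.coe_toNNReal']
    rcases le_total x 0 with h | h
    · rw [max_eq_right h, Real.sqrt_zero, Real.sqrt_eq_zero'.mpr h]
    · rw [max_eq_left h]
  rw [CFC.sqrt_eq_cfc, cfc_nnreal_eq_real _ A, hf, hA.1.cfc_eq]
  simp [IsHermitian.cfc, posSemidefSqrt, Unitary.conjStarAlgAut_apply]

open scoped MatrixOrder in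
lemma sqrt_psd {A : Matrix (Fin n) (Fin n) ℂ} (hA : A.PosSemidef) :
    (posSemidefSqrt A hA.1).PosSemidef := by
  rw [posSemidefSqrt_eq A hA]
  exact Matrix.nonneg_iff_posSemidef.mp (CFC.sqrt_nonneg A)

open scoped MatrixOrder in
lemma sqrt_mul_self {A : Matrix (Fin n) (Fin n) ℂ} (hA : A.PosSemidef) :
    posSemidefSqrt A hA.1 * posSemidefSqrt A hA.1 = A := by
  rw [posSemidefSqrt_eq A hA]
  exact CFC.sqrt_mul_sqrt_self A (Matrix.nonneg_iff_posSemidef.mpr hA)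

open scoped MatrixOrder in
lemma eq_sqrt_of_sq_eq {A B : Matrix (Fin n) (Fin n) ℂ} (hB : B.PosSemidef) (hA : A.PosSemidef)
    (h : B ^ 2 = A) : B = posSemidefSqrt A hA.1 := by
  rw [posSemidefSqrt_eq A hA]
  exact (CFC.sqrt_unique (by rw [← sq]; exact h) (Matrix.nonneg_iff_posSemidef.mpr hB)).symm

lemma mul_vecMulVec (M : Matrix (Fin n) (Fin n) ℂ) (x y : Fin n → ℂ) :
    M * vecMulVec x y = vecMulVec (M *ᵥ x) y := by
  ext i j
  simp [Matrix.mul_apply, vecMulVec_apply, mulVec, dotProduct, Finset.sum_mul, mul_assoc]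

lemma vecMulVec_mul (M : Matrix (Fin n) (Fin n) ℂ) (x y : Fin n → ℂ) :
    vecMulVec x y * M = vecMulVec x (y ᵥ* M) := by
  ext i j
  simp [Matrix.mul_apply, vecMulVec_apply, vecMul, dotProduct, Finset.mul_sum, mul_assoc]

lemma conj_mul_vecMulVec (M : Matrix (Fin n) (Fin n) ℂ) (x : Fin n → ℂ) :
    M * vecMulVec x (star x) * Mᴴ = vecMulVec (M *ᵥ x) (star (M *ᵥ x)) := by
  rw [mul_vecMulVec, vecMulVec_mul, star_mulVec]

lemma vecMulVec_smul_star (c : ℂ) (hc : c * (starRingEnd ℂ) c = 1) (x : Fin n → ℂ) :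
    vecMulVec (c • x) (star (c • x)) = vecMulVec x (star x) := by
  ext i j
  simp only [vecMulVec_apply, Pi.smul_apply, Pi.star_apply, smul_eq_mul, star_mul',
    RCLike.star_def]
  calc c * x i * ((starRingEnd ℂ) c * (starRingEnd ℂ) (x j))
      = (c * (starRingEnd ℂ) c) * (x i * (starRingEnd ℂ) (x j)) := by ring
    _ = x i * (starRingEnd ℂ) (x j) := by rw [hc, one_mul]

lemma trace_vecMulVec_mul (x y : Fin n → ℂ) (M : Matrix (Fin n) (Fin n) ℂ) :
    (vecMulVec x y * M).trace = y ⬝ᵥ (M *ᵥ x) := by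
  simp only [Matrix.trace, Matrix.diag, Matrix.mul_apply, vecMulVec_apply, dotProduct, mulVec]
  rw [Finset.sum_comm]
  simp [dotProduct, Finset.mul_sum]
  congr 1
  ext j
  congr 1
  ext i
  ring

lemma vecMulVec_mulVec (a b v : Fin n → ℂ) :
    vecMulVec a b *ᵥ v = (b ⬝ᵥ v) • a := by
  ext i
  simp only [mulVec, vecMulVec_apply, dotProduct, Pi.smul_apply, smul_eq_mul,
    Finset.sum_mul, Finset.mul_sum]
  exact Finset.sum_congr rfl fun j _ => by ring

lemma psd_diag_nonneg {M : Matrix (Fin n) (Fin n) ℂ} (hM : M.PosSemidef) (i : Fin n) :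
    0 ≤ M i i := by
  have h := hM.dotProduct_mulVec_nonneg (Pi.single i 1)
  simpa [dotProduct, Pi.single_apply, mulVec] using h

lemma psd_trace_nonneg {M : Matrix (Fin n) (Fin n) ℂ} (hM : M.PosSemidef) :
    0 ≤ M.trace :=
  Finset.sum_nonneg fun i _ => psd_diag_nonneg hM i

lemma psd_mul_trace_nonneg {D P : Matrix (Fin n) (Fin n) ℂ}
    (hD : D.PosSemidef) (hP : P.PosSemidef) : 0 ≤ (D * P).trace := by
  have h1 : D * P = posSemidefSqrt D hD.1 * (posSemidefSqrt D hD.1 * P) := by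
    rw [← mul_assoc, sqrt_mul_self hD]
  have h2 : (D * P).trace = (posSemidefSqrt D hD.1 * P * posSemidefSqrt D hD.1).trace := by
    rw [h1, Matrix.trace_mul_comm, mul_assoc]
  rw [h2]
  have : (posSemidefSqrt D hD.1 * P * posSemidefSqrt D hD.1).PosSemidef := by
    have := hP.mul_mul_conjTranspose_same (posSemidefSqrt D hD.1)
    rwa [(sqrt_psd hD).1.eq] at this
  exact psd_trace_nonneg this

lemma cauchy_schwarz_dot (a b : Fin n → ℂ) :
    Complex.normSq (star a ⬝ᵥ b) ≤ (star a ⬝ᵥ a).re * (star b ⬝ᵥ b).re := by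
  let a' : EuclideanSpace ℂ (Fin n) := WithLp.toLp 2 a
  let b' : EuclideanSpace ℂ (Fin n) := WithLp.toLp 2 b
  have hip : ∀ x y : EuclideanSpace ℂ (Fin n), (inner ℂ x y : ℂ) = star (x : Fin n → ℂ) ⬝ᵥ y := by
    intro x y
    simp [PiLp.inner_apply, dotProduct, RCLike.inner_apply, mul_comm]
  have h := norm_inner_le_norm (𝕜 := ℂ) a' b'
  have h2 : Complex.normSq (inner ℂ a' b' : ℂ) ≤ ‖a'‖ ^ 2 * ‖b'‖ ^ 2 := by
    rw [← Complex.sq_norm]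
    calc ‖(inner ℂ a' b' : ℂ)‖ ^ 2 ≤ (‖a'‖ * ‖b'‖) ^ 2 := by
          apply pow_le_pow_left₀ (by positivity) h
      _ = ‖a'‖ ^ 2 * ‖b'‖ ^ 2 := by ring
  rw [hip, ← inner_self_eq_norm_sq (𝕜 := ℂ) a', ← inner_self_eq_norm_sq (𝕜 := ℂ) b',
    hip, hip] at h2
  exact h2

lemma dotProduct_sandwich (A M : Matrix (Fin n) (Fin n) ℂ) (x : Fin n → ℂ) :
    star (A *ᵥ x) ⬝ᵥ (M *ᵥ (A *ᵥ x)) = star x ⬝ᵥ ((Aᴴ * M * A) *ᵥ x) := by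
  rw [star_mulVec, Matrix.mulVec_mulVec, Matrix.dotProduct_mulVec,
    Matrix.vecMul_vecMul, Matrix.dotProduct_mulVec, mul_assoc]

end CGUAux

/-- Theorem 3, rank-one CGU with commuting GU generators: for a pure-state
ensemble `ρ_{ik} = |φ_{ik}⟩⟨φ_{ik}|` with `|φ_{ik}⟩ = U_i V_k |φ⟩`, where the groups
`G = {U_i}` and `Q = {V_k}` commute up to a phase and `|φ⟩` is a unit vector, with
uniform priors `1/(lr)` and `W = ∑_{i,k} |φ_{ik}⟩⟨φ_{ik}|` positive definite, the
least-squares measurement with vectors `|μ_{ik}⟩ = W^{-1/2}|φ_{ik}⟩` and operators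
`Σ_{ik} = |μ_{ik}⟩⟨μ_{ik}|` minimizes the probability of a detection error. -/
theorem cgu_commuting_gu_rank_one_lsm_optimal (n l r : ℕ) [NeZero l] [NeZero r]
    (U : Fin l → Matrix (Fin n) (Fin n) ℂ)
    (hUunit : ∀ i, U i ∈ Matrix.unitaryGroup (Fin n) ℂ)
    (hUinj : Function.Injective U)
    (hUone : U 0 = 1)
    (hUmul : ∀ i j, ∃ t, U i * U j = U t)
    (hUinv : ∀ i, ∃ j, (U i)ᴴ = U j)
    (V : Fin r → Matrix (Fin n) (Fin n) ℂ)
    (hVunit : ∀ k, V k ∈ Matrix.unitaryGroup (Fin n) ℂ)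
    (hVinj : Function.Injective V)
    (hVone : V 0 = 1)
    (hVmul : ∀ k t, ∃ s, V k * V t = V s)
    (hVinv : ∀ k, ∃ t, (V k)ᴴ = V t)
    (hcomm : ∀ i k, ∃ θ : ℝ, U i * V k = Complex.exp (θ * Complex.I) • (V k * U i))
    (φ : Fin n → ℂ)
    (hφunit : star φ ⬝ᵥ φ = 1)
    (ρ : Fin l → Fin r → Matrix (Fin n) (Fin n) ℂ)
    (hρdef : ∀ i k, ρ i k =
      vecMulVec ((U i * V k) *ᵥ φ) (star ((U i * V k) *ᵥ φ)))
    (W : Matrix (Fin n) (Fin n) ℂ)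
    (hWdef : W = ∑ i, ∑ k, vecMulVec ((U i * V k) *ᵥ φ) (star ((U i * V k) *ᵥ φ)))
    (hW : W.PosDef)
    (μ : Fin l → Fin r → Fin n → ℂ)
    (hμ : ∀ i k, μ i k = (posSemidefSqrt W hW.isHermitian)⁻¹ *ᵥ ((U i * V k) *ᵥ φ)) :
    ∀ Pm : Fin l → Fin r → Matrix (Fin n) (Fin n) ℂ,
      (∀ i k, (Pm i k).PosSemidef) → (∑ i, ∑ k, Pm i k = 1) →
      ∑ i, ∑ k, (1 / ((l : ℝ) * (r : ℝ))) * ((ρ i k * Pm i k).trace).re ≤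
        ∑ i, ∑ k, (1 / ((l : ℝ) * (r : ℝ))) *
          ((ρ i k * vecMulVec (μ i k) (star (μ i k))).trace).re := by
  intro Pm hPm hPmsum
  classical
  set S := posSemidefSqrt W hW.isHermitian with hSdef
  have hSpsd : S.PosSemidef := CGUAux.sqrt_psd hW.posSemidef
  have hSherm : Sᴴ = S := hSpsd.1
  have hSsq : S * S = W := CGUAux.sqrt_mul_self hW.posSemidef
  -- unitary facts
  have hUHU : ∀ i, (U i)ᴴ * U i = 1 := by
    intro i
    have h := Matrix.mem_unitaryGroup_iff'.mp (hUunit i)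
    simpa [Matrix.star_eq_conjTranspose] using h
  have hAHA : ∀ i k, (U i * V k)ᴴ * (U i * V k) = 1 := by
    intro i k
    have h := Matrix.mem_unitaryGroup_iff'.mp (mul_mem (hUunit i) (hVunit k))
    simpa [Matrix.star_eq_conjTranspose] using h
  -- group translation maps
  choose σ hσ using hUmul
  choose τ hτ using hVmul
  have hσbij : ∀ i, Function.Bijective (σ i) := by
    intro i
    apply Finite.injective_iff_bijective.mp
    intro j j' h
    apply hUinj
    have h2 : U i * U j = U i * U j' := by rw [hσ, hσ, h]
    have h3 := congrArg (fun M => (U i)ᴴ * M) h2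
    simpa [← mul_assoc, hUHU i] using h3
  have hVHV : ∀ k, (V k)ᴴ * V k = 1 := by
    intro k
    have h := Matrix.mem_unitaryGroup_iff'.mp (hVunit k)
    simpa [Matrix.star_eq_conjTranspose] using h
  have hτbij : ∀ k, Function.Bijective (τ k) := by
    intro k
    apply Finite.injective_iff_bijective.mp
    intro t t' h
    apply hVinj
    have h2 : V k * V t = V k * V t' := by rw [hτ, hτ, h]
    have h3 := congrArg (fun M => (V k)ᴴ * M) h2
    simpa [← mul_assoc, hVHV k] using h3
  -- phase commutation of products
  have hphase : ∀ i k j t, ∃ e : ℂ, e * (starRingEnd ℂ) e = 1 ∧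
      (U i * V k) * (U j * V t) = e • (U (σ i j) * V (τ k t)) := by
    intro i k j t
    obtain ⟨θ, hθ⟩ := hcomm j k
    have hVU : V k * U j = Complex.exp (-(θ * Complex.I)) • (U j * V k) := by
      rw [hθ, smul_smul, ← Complex.exp_add]
      norm_num
    refine ⟨Complex.exp (-(θ * Complex.I)), ?_, ?_⟩
    · have hconj : (starRingEnd ℂ) (Complex.exp (-(θ * Complex.I))) =
          Complex.exp (θ * Complex.I) := by
        rw [← Complex.exp_conj]
        congr 1
        simp [Complex.conj_I]
      rw [hconj, ← Complex.exp_add]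
      norm_num
    · calc (U i * V k) * (U j * V t)
          = U i * ((V k * U j) * V t) := by simp only [mul_assoc]
        _ = U i * ((Complex.exp (-(θ * Complex.I)) • (U j * V k)) * V t) := by rw [hVU]
        _ = Complex.exp (-(θ * Complex.I)) • (U i * (U j * (V k * V t))) := by
            simp only [smul_mul_assoc, mul_smul_comm, mul_assoc]
        _ = Complex.exp (-(θ * Complex.I)) • (U (σ i j) * V (τ k t)) := by
            rw [← mul_assoc, hσ i j, hτ k t]
  -- W is invariant under conjugation by U i * V k
  have hAWA : ∀ i k, (U i * V k) * W * (U i * V k)ᴴ = W := by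
    intro i k
    have expand : (U i * V k) * W * (U i * V k)ᴴ
        = ∑ j, ∑ t, vecMulVec ((U (σ i j) * V (τ k t)) *ᵥ φ)
            (star ((U (σ i j) * V (τ k t)) *ᵥ φ)) := by
      rw [hWdef, Finset.mul_sum, Finset.sum_mul]
      refine Finset.sum_congr rfl fun j _ => ?_
      rw [Finset.mul_sum, Finset.sum_mul]
      refine Finset.sum_congr rfl fun t _ => ?_
      rw [CGUAux.conj_mul_vecMulVec, Matrix.mulVec_mulVec]
      obtain ⟨e, he1, he2⟩ := hphase i k j t
      rw [he2, Matrix.smul_mulVec]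
      exact CGUAux.vecMulVec_smul_star e he1 _
    rw [expand, hWdef]
    calc ∑ j, ∑ t, vecMulVec ((U (σ i j) * V (τ k t)) *ᵥ φ)
            (star ((U (σ i j) * V (τ k t)) *ᵥ φ))
        = ∑ j, ∑ t, vecMulVec ((U (σ i j) * V t) *ᵥ φ)
            (star ((U (σ i j) * V t) *ᵥ φ)) := by
          refine Finset.sum_congr rfl fun j _ => ?_
          exact Function.Bijective.sum_comp (hτbij k)
            (fun t => vecMulVec ((U (σ i j) * V t) *ᵥ φ) (star ((U (σ i j) * V t) *ᵥ φ)))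
      _ = ∑ j, ∑ t, vecMulVec ((U j * V t) *ᵥ φ) (star ((U j * V t) *ᵥ φ)) :=
          Function.Bijective.sum_comp (hσbij i)
            (fun j => ∑ t, vecMulVec ((U j * V t) *ᵥ φ) (star ((U j * V t) *ᵥ φ)))
  -- S is invariant under conjugation
  have hASA : ∀ i k, (U i * V k) * S * (U i * V k)ᴴ = S := by
    intro i k
    have hpsd : ((U i * V k) * S * (U i * V k)ᴴ).PosSemidef :=
      hSpsd.mul_mul_conjTranspose_same _
    have hsq : ((U i * V k) * S * (U i * V k)ᴴ) ^ 2 = W := by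
      rw [pow_two]
      calc ((U i * V k) * S * (U i * V k)ᴴ) * ((U i * V k) * S * (U i * V k)ᴴ)
          = (U i * V k) * (S * (((U i * V k)ᴴ * (U i * V k)) * (S * (U i * V k)ᴴ))) := by
            simp only [mul_assoc]
        _ = (U i * V k) * (S * S) * (U i * V k)ᴴ := by
            rw [hAHA i k, one_mul]; simp only [mul_assoc]
        _ = W := by rw [hSsq]; exact hAWA i k
    exact CGUAux.eq_sqrt_of_sq_eq hpsd hW.posSemidef hsq
  -- φ nonzero
  have hφne : φ ≠ 0 := by
    intro h
    rw [h] at hφunit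
    simp at hφunit
  -- S is positive definite
  have hSpd : S.PosDef := by
    refine Matrix.PosDef.of_dotProduct_mulVec_pos hSpsd.1 fun x hx => ?_
    set T := posSemidefSqrt S hSpsd.1 with hTdef
    have hT : T * T = S := CGUAux.sqrt_mul_self hSpsd
    have hTherm : Tᴴ = T := (CGUAux.sqrt_psd hSpsd).1
    have key : star x ⬝ᵥ (S *ᵥ x) = star (T *ᵥ x) ⬝ᵥ (T *ᵥ x) := by
      rw [star_mulVec, hTherm, ← hT, ← Matrix.mulVec_mulVec, Matrix.dotProduct_mulVec]
    have hTx : T *ᵥ x ≠ 0 := by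
      intro h0
      have hSx : S *ᵥ x = 0 := by
        rw [← hT, ← Matrix.mulVec_mulVec, h0, Matrix.mulVec_zero]
      have hWx : W *ᵥ x = 0 := by
        rw [← hSsq, ← Matrix.mulVec_mulVec, hSx, Matrix.mulVec_zero]
      have hpos := hW.dotProduct_mulVec_pos hx
      rw [hWx, dotProduct_zero] at hpos
      exact lt_irrefl _ hpos
    rw [key]
    have h1 : 0 ≤ star (T *ᵥ x) ⬝ᵥ (T *ᵥ x) := dotProduct_star_self_nonneg _
    have h2 : star (T *ᵥ x) ⬝ᵥ (T *ᵥ x) ≠ 0 := fun h0 =>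
      hTx (dotProduct_star_self_eq_zero.mp h0)
    exact lt_of_le_of_ne h1 (Ne.symm h2)
  have hSdetu : IsUnit S.det := (Matrix.isUnit_iff_isUnit_det _).mp hSpd.isUnit
  have hSSinv : S * S⁻¹ = 1 := Matrix.mul_nonsing_inv _ hSdetu
  have hSinvS : S⁻¹ * S = 1 := Matrix.nonsing_inv_mul _ hSdetu
  have hSinvpd : (S⁻¹).PosDef := hSpd.inv
  have hSinvherm : (S⁻¹)ᴴ = S⁻¹ := hSinvpd.1
  -- commutation with S and S⁻¹
  have hAS : ∀ i k, (U i * V k) * S = S * (U i * V k) := by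
    intro i k
    calc (U i * V k) * S
        = (U i * V k) * S * ((U i * V k)ᴴ * (U i * V k)) := by rw [hAHA, mul_one]
      _ = ((U i * V k) * S * (U i * V k)ᴴ) * (U i * V k) := by simp only [mul_assoc]
      _ = S * (U i * V k) := by rw [hASA]
  have hASinv : ∀ i k, (U i * V k) * S⁻¹ = S⁻¹ * (U i * V k) := by
    intro i k
    calc (U i * V k) * S⁻¹
        = (S⁻¹ * S) * ((U i * V k) * S⁻¹) := by rw [hSinvS, one_mul]
      _ = S⁻¹ * ((S * (U i * V k)) * S⁻¹) := by simp only [mul_assoc]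
      _ = S⁻¹ * (((U i * V k) * S) * S⁻¹) := by rw [hAS]
      _ = S⁻¹ * ((U i * V k) * (S * S⁻¹)) := by simp only [mul_assoc]
      _ = S⁻¹ * (U i * V k) := by rw [hSSinv, mul_one]
  have hAconjinv : ∀ i k, (U i * V k)ᴴ * S⁻¹ * (U i * V k) = S⁻¹ := by
    intro i k
    calc (U i * V k)ᴴ * S⁻¹ * (U i * V k)
        = (U i * V k)ᴴ * (S⁻¹ * (U i * V k)) := by rw [mul_assoc]
      _ = (U i * V k)ᴴ * ((U i * V k) * S⁻¹) := by rw [hASinv]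
      _ = ((U i * V k)ᴴ * (U i * V k)) * S⁻¹ := by simp only [mul_assoc]
      _ = S⁻¹ := by rw [hAHA, one_mul]
  -- the common overlap
  set c : ℂ := star φ ⬝ᵥ (S⁻¹ *ᵥ φ) with hcdef
  have hcpos : 0 < c := hSinvpd.dotProduct_mulVec_pos hφne
  have hcre : 0 < c.re := (Complex.lt_def.mp hcpos).1
  have hcim : c.im = 0 := ((Complex.lt_def.mp hcpos).2).symm
  have hc_all : ∀ i k,
      star ((U i * V k) *ᵥ φ) ⬝ᵥ (S⁻¹ *ᵥ ((U i * V k) *ᵥ φ)) = c := by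
    intro i k
    rw [CGUAux.dotProduct_sandwich, hAconjinv]
  -- square root of S⁻¹
  set N := posSemidefSqrt S⁻¹ hSinvpd.posSemidef.1 with hNdef
  have hN : N * N = S⁻¹ := CGUAux.sqrt_mul_self hSinvpd.posSemidef
  have hNherm : Nᴴ = N := (CGUAux.sqrt_psd hSinvpd.posSemidef).1
  have hNsplit : ∀ a b : Fin n → ℂ,
      star a ⬝ᵥ (S⁻¹ *ᵥ b) = star (N *ᵥ a) ⬝ᵥ (N *ᵥ b) := by
    intro a b
    rw [star_mulVec, hNherm, ← hN, ← Matrix.mulVec_mulVec, Matrix.dotProduct_mulVec]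
  -- key positivity: c • S - ρ i k is PSD
  have hkey : ∀ i k, ((c • S) - ρ i k).PosSemidef := by
    intro i k
    refine Matrix.PosSemidef.of_dotProduct_mulVec_nonneg ?_ ?_
    · have h1 : (c • S)ᴴ = c • S := by
        rw [Matrix.conjTranspose_smul, hSherm]
        congr 1
        exact Complex.conj_eq_iff_im.mpr hcim
      have h2 : (ρ i k)ᴴ = ρ i k := by
        rw [hρdef]
        ext a b
        simp [vecMulVec_apply, conjTranspose_apply, mul_comm]
      show ((c • S) - ρ i k)ᴴ = (c • S) - ρ i k
      rw [Matrix.conjTranspose_sub, h1, h2]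
    · intro x
      rw [hρdef]
      set f := (U i * V k) *ᵥ φ with hf
      have expand : star x ⬝ᵥ (((c • S) - vecMulVec f (star f)) *ᵥ x)
          = c * (star x ⬝ᵥ (S *ᵥ x)) - (star f ⬝ᵥ x) * (star x ⬝ᵥ f) := by
        rw [Matrix.sub_mulVec, dotProduct_sub, Matrix.smul_mulVec,
          dotProduct_smul, CGUAux.vecMulVec_mulVec, dotProduct_smul,
          smul_eq_mul, smul_eq_mul]
      rw [expand]
      have hz : (star f ⬝ᵥ x) * (star x ⬝ᵥ f)
          = (Complex.normSq (star f ⬝ᵥ x) : ℂ) := by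
        have hsx : star x ⬝ᵥ f = (starRingEnd ℂ) (star f ⬝ᵥ x) := by
          simp [dotProduct, map_sum, mul_comm]
        rw [hsx, Complex.mul_conj]
      rw [hz]
      -- Cauchy-Schwarz
      have hx' : x = S⁻¹ *ᵥ (S *ᵥ x) := by
        rw [Matrix.mulVec_mulVec, hSinvS, Matrix.one_mulVec]
      have hy : star f ⬝ᵥ x = star (N *ᵥ f) ⬝ᵥ (N *ᵥ (S *ᵥ x)) := by
        conv_lhs => rw [hx']
        exact hNsplit f (S *ᵥ x)
      have ha : star (N *ᵥ f) ⬝ᵥ (N *ᵥ f) = c := by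
        rw [← hNsplit]
        exact hc_all i k
      have hb : star (N *ᵥ (S *ᵥ x)) ⬝ᵥ (N *ᵥ (S *ᵥ x)) = star x ⬝ᵥ (S *ᵥ x) := by
        rw [← hNsplit, CGUAux.dotProduct_sandwich, hSherm]
        rw [mul_assoc, hSinvS, mul_one]
      have hCS := CGUAux.cauchy_schwarz_dot (N *ᵥ f) (N *ᵥ (S *ᵥ x))
      rw [ha, hb, ← hy] at hCS
      set w := star x ⬝ᵥ (S *ᵥ x) with hwdef
      have hwpos : 0 ≤ w := hSpsd.dotProduct_mulVec_nonneg x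
      have hwim : w.im = 0 := ((Complex.le_def.mp hwpos).2).symm
      have hwre : 0 ≤ w.re := by
        have := (Complex.le_def.mp hwpos).1
        simpa using this
      rw [Complex.le_def]
      constructor
      · simp only [Complex.zero_re, Complex.sub_re, Complex.mul_re, hcim, hwim,
          Complex.ofReal_re, mul_zero, zero_mul, sub_zero]
        linarith
      · simp only [Complex.zero_im, Complex.sub_im, Complex.mul_im, hcim, hwim,
          Complex.ofReal_im, mul_zero, zero_mul, add_zero, sub_zero, sub_self]
  -- per-term trace bound
  have htrace : ∀ i k,
      ((ρ i k * Pm i k).trace).re ≤ c.re * ((S * Pm i k).trace).re := by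
    intro i k
    have h0 := CGUAux.psd_mul_trace_nonneg (hkey i k) (hPm i k)
    have hexp : ((c • S - ρ i k) * Pm i k).trace
        = c * (S * Pm i k).trace - (ρ i k * Pm i k).trace := by
      rw [Matrix.sub_mul, Matrix.trace_sub, Matrix.smul_mul, Matrix.trace_smul,
        smul_eq_mul]
    rw [hexp] at h0
    have hre := (Complex.le_def.mp h0).1
    simp only [Complex.zero_re, Complex.sub_re, Complex.mul_re, hcim, zero_mul,
      sub_zero] at hre
    linarith
  -- value of the LSM terms
  have hRHSterm : ∀ i k,
      (ρ i k * vecMulVec (μ i k) (star (μ i k))).trace = c * c := by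
    intro i k
    rw [hρdef, hμ, CGUAux.trace_vecMulVec_mul, CGUAux.vecMulVec_mulVec,
      dotProduct_smul, smul_eq_mul]
    have h1 : star ((U i * V k) *ᵥ φ) ⬝ᵥ (S⁻¹ *ᵥ ((U i * V k) *ᵥ φ)) = c := hc_all i k
    have h2 : star (S⁻¹ *ᵥ ((U i * V k) *ᵥ φ)) ⬝ᵥ ((U i * V k) *ᵥ φ) = c := by
      rw [star_mulVec, hSinvherm, ← Matrix.dotProduct_mulVec]
      exact h1
    rw [h1, h2]
  -- trace of S
  have htrS : S.trace = ((l : ℂ) * (r : ℂ)) * c := by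
    have hWS : W * S⁻¹ = S := by
      rw [← hSsq, mul_assoc, hSSinv, mul_one]
    rw [← hWS, hWdef, Finset.sum_mul, Matrix.trace_sum]
    have hrow : ∀ j, ((∑ t, vecMulVec ((U j * V t) *ᵥ φ)
        (star ((U j * V t) *ᵥ φ))) * S⁻¹).trace = (r : ℂ) * c := by
      intro j
      rw [Finset.sum_mul, Matrix.trace_sum]
      have hcol : ∀ t, ((vecMulVec ((U j * V t) *ᵥ φ)
          (star ((U j * V t) *ᵥ φ))) * S⁻¹).trace = c := by
        intro t
        rw [CGUAux.trace_vecMulVec_mul]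
        exact hc_all j t
      rw [Finset.sum_congr rfl fun t _ => hcol t, Finset.sum_const,
        Finset.card_univ, Fintype.card_fin, nsmul_eq_mul]
    rw [Finset.sum_congr rfl fun j _ => hrow j, Finset.sum_const,
      Finset.card_univ, Fintype.card_fin, nsmul_eq_mul]
    ring
  -- cast facts
  have hl0 : (l : ℝ) ≠ 0 := Nat.cast_ne_zero.mpr (NeZero.ne l)
  have hr0 : (r : ℝ) ≠ 0 := Nat.cast_ne_zero.mpr (NeZero.ne r)
  -- final chain
  have hRHS : ∑ i, ∑ k, (1 / ((l : ℝ) * (r : ℝ))) *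
      ((ρ i k * vecMulVec (μ i k) (star (μ i k))).trace).re = c.re * c.re := by
    have : ∀ i : Fin l, ∀ k : Fin r, (1 / ((l : ℝ) * (r : ℝ))) *
        ((ρ i k * vecMulVec (μ i k) (star (μ i k))).trace).re
        = (1 / ((l : ℝ) * (r : ℝ))) * (c.re * c.re) := by
      intro i k
      rw [hRHSterm i k]
      congr 1
      simp [Complex.mul_re, hcim]
    rw [Finset.sum_congr rfl fun i _ => Finset.sum_congr rfl fun k _ => this i k]
    simp only [Finset.sum_const, Finset.card_univ, Fintype.card_fin, nsmul_eq_mul]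
    field_simp
  have hmid : ∑ i, ∑ k, (1 / ((l : ℝ) * (r : ℝ))) *
      (c.re * ((S * Pm i k).trace).re) = c.re * c.re := by
    have hsum : ∑ i : Fin l, ∑ k : Fin r, ((S * Pm i k).trace).re
        = (S.trace).re := by
      have h1 : ∑ i : Fin l, ∑ k : Fin r, ((S * Pm i k).trace).re
          = ((∑ i : Fin l, ∑ k : Fin r, (S * Pm i k).trace)).re := by
        rw [Complex.re_sum]
        exact Finset.sum_congr rfl fun i _ => (Complex.re_sum _ _).symm
      rw [h1]
      congr 1
      have hdist : ∑ i : Fin l, ∑ k : Fin r, (S * Pm i k)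
          = S * (∑ i : Fin l, ∑ k : Fin r, Pm i k) := by
        rw [Finset.mul_sum]
        exact Finset.sum_congr rfl fun i _ => (Finset.mul_sum _ _ _).symm
      have h2 : ∑ i : Fin l, ∑ k : Fin r, (S * Pm i k).trace
          = (∑ i : Fin l, ∑ k : Fin r, (S * Pm i k)).trace := by
        rw [Matrix.trace_sum]
        exact Finset.sum_congr rfl fun i _ => (Matrix.trace_sum _ _).symm
      rw [h2, hdist, hPmsum, mul_one]
    have hStr_re : (S.trace).re = (l : ℝ) * (r : ℝ) * c.re := by
      rw [htrS]
      simp [Complex.mul_re, hcim]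
    calc ∑ i, ∑ k, (1 / ((l : ℝ) * (r : ℝ))) * (c.re * ((S * Pm i k).trace).re)
        = ((1 / ((l : ℝ) * (r : ℝ))) * c.re) *
            ∑ i : Fin l, ∑ k : Fin r, ((S * Pm i k).trace).re := by
          rw [Finset.mul_sum]
          refine Finset.sum_congr rfl fun i _ => ?_
          rw [Finset.mul_sum]
          exact Finset.sum_congr rfl fun k _ => by ring
      _ = ((1 / ((l : ℝ) * (r : ℝ))) * c.re) * ((l : ℝ) * (r : ℝ) * c.re) := by
          rw [hsum, hStr_re]
      _ = c.re * c.re := by field_simp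
  rw [hRHS]
  calc ∑ i, ∑ k, (1 / ((l : ℝ) * (r : ℝ))) * ((ρ i k * Pm i k).trace).re
      ≤ ∑ i, ∑ k, (1 / ((l : ℝ) * (r : ℝ))) * (c.re * ((S * Pm i k).trace).re) := by
        refine Finset.sum_le_sum fun i _ => Finset.sum_le_sum fun k _ => ?_
        refine mul_le_mul_of_nonneg_left (htrace i k) ?_
        positivity
    _ = c.re * c.re := hmid
end

section
/- (Theorem 3, existence of a CGU optimal measurement) For a compound geometrically uniform state set {ρ_{ik} = U_iρ_kU_i*, 1 ≤ i ≤ l, 1 ≤ k ≤ r} with uniform priors, there exists an optimal POVM that is compound geometrically uniform with the same generating group: there exist positive semidefinite Hermitian matrices Π̂_1,...,Π̂_r such that the operators Π̄_{ik} = U_iΠ̂_kU_i* form a POVM and Σ_{i,k} tr(ρ_{ik}Π̄_{ik}) ≥ Σ_{i,k} tr(ρ_{ik}Π_{ik}) for every POVM {Π_{ik}}. Specifically, if {Π̂_{ik}} is any optimal POVM, one may take Π̂_k = (1/l)Σ_{s=1}^l U_s*Π̂_{sk}U_s. -/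
set_option maxHeartbeats 1000000


open Matrix
open scoped ComplexOrder

private lemma psd_sum_s19 {n : ℕ} {ι : Type*} (s : Finset ι)
    (f : ι → Matrix (Fin n) (Fin n) ℂ) (h : ∀ i ∈ s, (f i).PosSemidef) :
    (∑ i ∈ s, f i).PosSemidef := by
  classical
  induction s using Finset.induction_on with
  | empty => simpa using Matrix.PosSemidef.zero
  | insert _ _ hx ih =>
    rw [Finset.sum_insert hx]
    exact (h _ (Finset.mem_insert_self _ _)).add
      (ih fun i hi => h i (Finset.mem_insert_of_mem hi))

private lemma psd_smul {n : ℕ} (c : ℝ) (hc : 0 ≤ c)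
    {A : Matrix (Fin n) (Fin n) ℂ} (hA : A.PosSemidef) :
    ((c : ℂ) • A).PosSemidef := by
  constructor
  · unfold Matrix.IsHermitian
    rw [Matrix.conjTranspose_smul, hA.1]
    congr 1
    simp
  · intro x
    have := hA.2 x
    exact (hA.smul (a := (c : ℂ)) (Complex.zero_le_real.mpr hc)).2 x

/-- Theorem 3, existence of a CGU optimal measurement: for a compound
geometrically uniform state set `ρ_{ik} = U_i ρ_k U_i*` with uniform priors, there exist
positive semidefinite Hermitian matrices `Π̂_1,...,Π̂_r` such that the operators
`Π̄_{ik} = U_i Π̂_k U_i*` form a POVM that is optimal; specifically, given any optimal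
POVM `{Π̂_{ik}}` one may take `Π̂_k = (1/l) ∑_s U_s* Π̂_{sk} U_s`. -/
theorem cgu_optimal_povm_is_cgu (n l r : ℕ) [NeZero l]
    (U : Fin l → Matrix (Fin n) (Fin n) ℂ)
    (hUunit : ∀ i, U i ∈ Matrix.unitaryGroup (Fin n) ℂ)
    (hUinj : Function.Injective U)
    (hUone : U 0 = 1)
    (hUmul : ∀ i j, ∃ t, U i * U j = U t)
    (hUinv : ∀ i, ∃ j, (U i)ᴴ = U j)
    (ρgen : Fin r → Matrix (Fin n) (Fin n) ℂ)
    (hρgenpsd : ∀ k, (ρgen k).PosSemidef) (hρgentr : ∀ k, (ρgen k).trace = 1)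
    (ρ : Fin l → Fin r → Matrix (Fin n) (Fin n) ℂ)
    (hρdef : ∀ i k, ρ i k = U i * ρgen k * (U i)ᴴ)
    (Phat : Fin l → Fin r → Matrix (Fin n) (Fin n) ℂ)
    (hPhatpsd : ∀ i k, (Phat i k).PosSemidef) (hPhatsum : ∑ i, ∑ k, Phat i k = 1)
    (hPhatopt : ∀ Pm : Fin l → Fin r → Matrix (Fin n) (Fin n) ℂ,
      (∀ i k, (Pm i k).PosSemidef) → (∑ i, ∑ k, Pm i k = 1) →
      ∑ i, ∑ k, ((ρ i k * Pm i k).trace).re ≤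
        ∑ i, ∑ k, ((ρ i k * Phat i k).trace).re)
    (Pbar : Fin r → Matrix (Fin n) (Fin n) ℂ)
    (hPbar : ∀ k, Pbar k = ((l : ℂ))⁻¹ • ∑ s, (U s)ᴴ * Phat s k * U s) :
    (∀ k, (Pbar k).PosSemidef) ∧
    (∀ i k, (U i * Pbar k * (U i)ᴴ).PosSemidef) ∧
    (∑ i, ∑ k, U i * Pbar k * (U i)ᴴ = 1) ∧
    (∀ Pm : Fin l → Fin r → Matrix (Fin n) (Fin n) ℂ,
      (∀ i k, (Pm i k).PosSemidef) → (∑ i, ∑ k, Pm i k = 1) →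
      ∑ i, ∑ k, ((ρ i k * Pm i k).trace).re ≤
        ∑ i, ∑ k, ((ρ i k * (U i * Pbar k * (U i)ᴴ)).trace).re) := by
  have hl : (l : ℂ) ≠ 0 := by exact_mod_cast (NeZero.ne l)
  have hUstar : ∀ i, (U i)ᴴ * U i = 1 := by
    intro i
    have := (hUunit i).1
    rwa [← Matrix.star_eq_conjTranspose]
  have hUstar' : ∀ i, U i * (U i)ᴴ = 1 := by
    intro i
    have := (hUunit i).2
    rwa [← Matrix.star_eq_conjTranspose]
  -- positive semidefiniteness of Pbar
  have hPbarpsd : ∀ k, (Pbar k).PosSemidef := by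
    intro k
    rw [hPbar k]
    have : ((l : ℂ))⁻¹ = (((l : ℝ)⁻¹ : ℝ) : ℂ) := by push_cast; ring
    rw [this]
    refine psd_smul _ (by positivity) ?_
    exact psd_sum_s19 _ _ fun s _ => (hPhatpsd s k).conjTranspose_mul_mul_same (U s)
  refine ⟨hPbarpsd, fun i k => (hPbarpsd k).mul_mul_conjTranspose_same (U i), ?_, ?_⟩
  -- bijections from group structure
  have hbij : ∀ s : Fin l, ∃ f : Fin l → Fin l, Function.Bijective f ∧
      ∀ i, U (f i) = U s * (U i)ᴴ := by
    intro s
    have hex : ∀ i : Fin l, ∃ t, U t = U s * (U i)ᴴ := by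
      intro i
      obtain ⟨j, hj⟩ := hUinv i
      obtain ⟨t, ht⟩ := hUmul s j
      exact ⟨t, by rw [hj, ht]⟩
    choose f hf using hex
    refine ⟨f, Finite.injective_iff_bijective.mp ?_, hf⟩
    intro a b hab
    have h1 : U s * (U a)ᴴ = U s * (U b)ᴴ := by rw [← hf a, ← hf b, hab]
    have h2 : (U a)ᴴ = (U b)ᴴ := by
      have := congrArg (fun M => (U s)ᴴ * M) h1
      simpa [← Matrix.mul_assoc, hUstar s] using this
    exact hUinj (by rw [← Matrix.conjTranspose_conjTranspose (U a), h2,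
      Matrix.conjTranspose_conjTranspose])
  -- completeness of the CGU POVM
  · have key : ∀ i k, U i * Pbar k * (U i)ᴴ =
        ((l : ℂ))⁻¹ • ∑ s, (U s * (U i)ᴴ)ᴴ * Phat s k * (U s * (U i)ᴴ) := by
      intro i k
      rw [hPbar k]
      rw [Matrix.mul_smul, Matrix.smul_mul, Finset.mul_sum, Finset.sum_mul]
      congr 1
      refine Finset.sum_congr rfl fun s _ => ?_
      simp [Matrix.conjTranspose_mul, Matrix.mul_assoc]
    have hre : ∀ s : Fin l, ∀ k : Fin r,
        ∑ i, (U s * (U i)ᴴ)ᴴ * Phat s k * (U s * (U i)ᴴ) =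
        ∑ t, (U t)ᴴ * Phat s k * (U t) := by
      intro s k
      obtain ⟨f, hfbij, hf⟩ := hbij s
      calc ∑ i, (U s * (U i)ᴴ)ᴴ * Phat s k * (U s * (U i)ᴴ)
          = ∑ i, (U (f i))ᴴ * Phat s k * (U (f i)) := by
            refine Finset.sum_congr rfl fun i _ => by rw [hf i]
        _ = ∑ t, (U t)ᴴ * Phat s k * (U t) :=
            Function.Bijective.sum_comp hfbij (fun t => (U t)ᴴ * Phat s k * (U t))
    have hM : ∑ i : Fin l, ∑ k : Fin r, ∑ s : Fin l,
        (U s * (U i)ᴴ)ᴴ * Phat s k * (U s * (U i)ᴴ) = l • (1 : Matrix (Fin n) (Fin n) ℂ) := by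
      calc ∑ i : Fin l, ∑ k : Fin r, ∑ s : Fin l, (U s * (U i)ᴴ)ᴴ * Phat s k * (U s * (U i)ᴴ)
          = ∑ i : Fin l, ∑ s : Fin l, ∑ k : Fin r,
            (U s * (U i)ᴴ)ᴴ * Phat s k * (U s * (U i)ᴴ) :=
            Finset.sum_congr rfl fun i _ => Finset.sum_comm
        _ = ∑ s : Fin l, ∑ i : Fin l, ∑ k : Fin r,
            (U s * (U i)ᴴ)ᴴ * Phat s k * (U s * (U i)ᴴ) := Finset.sum_comm
        _ = ∑ s : Fin l, ∑ k : Fin r, ∑ i : Fin l,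
            (U s * (U i)ᴴ)ᴴ * Phat s k * (U s * (U i)ᴴ) :=
            Finset.sum_congr rfl fun s _ => Finset.sum_comm
        _ = ∑ s : Fin l, ∑ k : Fin r, ∑ t : Fin l, (U t)ᴴ * Phat s k * (U t) := by
            refine Finset.sum_congr rfl fun s _ => Finset.sum_congr rfl fun k _ => hre s k
        _ = ∑ s : Fin l, ∑ t : Fin l, ∑ k : Fin r, (U t)ᴴ * Phat s k * (U t) :=
            Finset.sum_congr rfl fun s _ => Finset.sum_comm
        _ = ∑ t : Fin l, ∑ s : Fin l, ∑ k : Fin r, (U t)ᴴ * Phat s k * (U t) :=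
            Finset.sum_comm
        _ = ∑ t : Fin l, (U t)ᴴ * (∑ s, ∑ k, Phat s k) * (U t) := by
            refine Finset.sum_congr rfl fun t _ => ?_
            rw [Finset.mul_sum, Finset.sum_mul]
            refine Finset.sum_congr rfl fun s _ => ?_
            rw [Finset.mul_sum, Finset.sum_mul]
        _ = ∑ t : Fin l, (1 : Matrix (Fin n) (Fin n) ℂ) := by
            rw [hPhatsum]
            exact Finset.sum_congr rfl fun t _ => by rw [Matrix.mul_one, hUstar]
        _ = l • (1 : Matrix (Fin n) (Fin n) ℂ) := by
            rw [Finset.sum_const, Finset.card_univ, Fintype.card_fin]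
    calc ∑ i, ∑ k, U i * Pbar k * (U i)ᴴ
        = ∑ i, ∑ k, ((l : ℂ))⁻¹ • ∑ s, (U s * (U i)ᴴ)ᴴ * Phat s k * (U s * (U i)ᴴ) := by
          exact Finset.sum_congr rfl fun i _ => Finset.sum_congr rfl fun k _ => key i k
      _ = ((l : ℂ))⁻¹ • ∑ i, ∑ k, ∑ s, (U s * (U i)ᴴ)ᴴ * Phat s k * (U s * (U i)ᴴ) := by
          rw [Finset.smul_sum]
          exact Finset.sum_congr rfl fun i _ => (Finset.smul_sum).symm
      _ = ((l : ℂ))⁻¹ • (l • (1 : Matrix (Fin n) (Fin n) ℂ)) := by rw [hM]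
      _ = 1 := by
          rw [← Nat.cast_smul_eq_nsmul ℂ, smul_smul, inv_mul_cancel₀ hl, one_smul]
  -- optimality
  · intro Pm hPmpsd hPmsum
    refine le_trans (hPhatopt Pm hPmpsd hPmsum) (le_of_eq ?_)
    have key : ∀ i k, (ρ i k * (U i * Pbar k * (U i)ᴴ)).trace =
        (ρgen k * Pbar k).trace := by
      intro i k
      rw [hρdef]
      have : U i * ρgen k * (U i)ᴴ * (U i * Pbar k * (U i)ᴴ)
          = U i * (ρgen k * Pbar k) * (U i)ᴴ := by
        calc U i * ρgen k * (U i)ᴴ * (U i * Pbar k * (U i)ᴴ)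
            = U i * ρgen k * ((U i)ᴴ * U i) * Pbar k * (U i)ᴴ := by
              simp [Matrix.mul_assoc]
          _ = U i * (ρgen k * Pbar k) * (U i)ᴴ := by
              rw [hUstar]; simp [Matrix.mul_assoc]
      rw [this, Matrix.trace_mul_cycle, ← Matrix.mul_assoc, hUstar, Matrix.one_mul]
    have key2 : ∀ s k, (ρ s k * Phat s k).trace =
        ((U s)ᴴ * Phat s k * U s * ρgen k).trace := by
      intro s k
      rw [hρdef, Matrix.trace_mul_cycle, Matrix.trace_mul_cycle, ← Matrix.mul_assoc]
    -- reduce to complex trace identity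
    have main : ∑ s, ∑ k, (ρ s k * Phat s k).trace =
        ∑ i, ∑ k, (ρ i k * (U i * Pbar k * (U i)ᴴ)).trace := by
      calc ∑ s, ∑ k, (ρ s k * Phat s k).trace
          = ∑ s, ∑ k, ((U s)ᴴ * Phat s k * U s * ρgen k).trace :=
            Finset.sum_congr rfl fun s _ => Finset.sum_congr rfl fun k _ => key2 s k
        _ = ∑ k, ∑ s, ((U s)ᴴ * Phat s k * U s * ρgen k).trace := Finset.sum_comm
        _ = ∑ k : Fin r, ((∑ s, (U s)ᴴ * Phat s k * U s) * ρgen k).trace := by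
            refine Finset.sum_congr rfl fun k _ => ?_
            rw [Finset.sum_mul, Matrix.trace_sum]
        _ = ∑ k : Fin r, (l : ℂ) * (ρgen k * Pbar k).trace := by
            refine Finset.sum_congr rfl fun k _ => ?_
            rw [hPbar k, Matrix.mul_smul, Matrix.trace_smul, Matrix.trace_mul_comm,
              smul_eq_mul, ← mul_assoc, mul_inv_cancel₀ hl, one_mul]
        _ = ∑ i : Fin l, ∑ k, (ρgen k * Pbar k).trace := by
            rw [Finset.sum_const, Finset.card_univ, Fintype.card_fin, Finset.smul_sum]
            refine Finset.sum_congr rfl fun k _ => ?_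
            rw [nsmul_eq_mul]
        _ = ∑ i, ∑ k, (ρ i k * (U i * Pbar k * (U i)ᴴ)).trace :=
            Finset.sum_congr rfl fun i _ => Finset.sum_congr rfl fun k _ => (key i k).symm
    calc ∑ i, ∑ k, ((ρ i k * Phat i k).trace).re
        = (∑ i, ∑ k, (ρ i k * Phat i k).trace).re := by
          simp [Complex.re_sum]
      _ = (∑ i, ∑ k, (ρ i k * (U i * Pbar k * (U i)ᴴ)).trace).re := by rw [main]
      _ = ∑ i, ∑ k, ((ρ i k * (U i * Pbar k * (U i)ᴴ)).trace).re := by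
          simp [Complex.re_sum]
end
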